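/- arXiv:2201.03663 — 8 statements merged into one kernel-verified Lean document; each statement's English description precedes it below -/
import Mathlib

section
/- Let F be a family of subsets of [n] such that there are no two sets A,B ∈ F with A ⊂ B and |B \ A| > k. Then |F| ≤ Σ_{i=⌊(n-k)/2⌋}^{⌊(n+k)/2⌋} C(n,i). -/
/-!
The subsets of `range n` split into symmetric chains `A_a ⊂ A_(a+1) ⊂ ⋯ ⊂ A_(n-a)` with
`#A_i = i` (de Bruijn–Tengbergen–Kruyswijk): each chain of subsets of `range n` gives the chains
`A_a ⊂ ⋯ ⊂ A_(n-a) ⊂ A_(n-a) ∪ {n}` and `A_a ∪ {n} ⊂ ⋯ ⊂ A_(n-a-1) ∪ {n}` of subsets of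
`range (n + 1)`. The members of `F` on one chain have sizes within `k` of each other, so there
are at most `min (k + 1) (n + 1 - 2a)` of them. This is exactly the number of sets in the chain
whose size lies in the window `[(n - k) / 2, (n + k) / 2]`, and summing over the chains gives
the number of all subsets of that size.
-/

open Finset

theorem Finset.insert_inj_of_notMem {α : Type*} [DecidableEq α] {a : α} {s t : Finset α}
    (hs : a ∉ s) (ht : a ∉ t) : insert a s = insert a t ↔ s = t := by
  refine ⟨fun h => ?_, congrArg _⟩
  simpa [erase_insert hs, erase_insert ht] using congrArg (·.erase a) h

theorem Finset.insert_ssubset_insert_of_notMem {α : Type*} [DecidableEq α] {a : α}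
    {s t : Finset α} (ha : a ∉ t) (hst : s ⊂ t) : insert a s ⊂ insert a t :=
  ssubset_iff_subset_ne.2 ⟨insert_subset_insert _ hst.subset,
    fun h => hst.ne ((insert_inj_of_notMem (fun has => ha (hst.subset has)) ha).1 h)⟩

theorem Finset.card_filter_card_mem_powerset {α : Type*} [DecidableEq α] (s : Finset α)
    (W : Finset ℕ) : #(s.powerset.filter (#· ∈ W)) = ∑ i ∈ W, (#s).choose i := by
  have : s.powerset.filter (#· ∈ W) = W.biUnion (powersetCard · s) := by
    ext t
    simp [and_comm]
  rw [this, card_biUnion fun i _ j _ hij => pairwise_disjoint_powersetCard s hij]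
  simp

theorem List.Nodup.countP_eq_card_filter {α : Type*} [DecidableEq α] {l : List α}
    (hl : l.Nodup) (p : α → Bool) : l.countP p = #(l.toFinset.filter (p ·)) := by
  rw [List.countP_eq_length_filter, ← List.toFinset_card_of_nodup (hl.filter p),
    List.toFinset_filter]

theorem List.Pairwise.isChain_toFinset {α : Type*} [DecidableEq α] {c : List (Finset α)}
    (h : c.Pairwise (· ⊂ ·)) : _root_.IsChain (· ⊆ ·) (c.toFinset : Set (Finset α)) := by
  intro A hA B hB hAB
  have : Std.Symm fun A B : Finset α => A ⊆ B ∨ B ⊆ A := ⟨fun _ _ => Or.symm⟩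
  have hcomp : c.Pairwise fun A B => A ⊆ B ∨ B ⊆ A := h.imp fun hlt => Or.inl hlt.subset
  exact hcomp.forall (List.mem_toFinset.1 hA) (List.mem_toFinset.1 hB) hAB

theorem IsChain.card_le_add_one_of_card_sdiff_le {α : Type*} [DecidableEq α]
    {S : Finset (Finset α)} {k : ℕ} (hS : IsChain (· ⊆ ·) (S : Set (Finset α)))
    (hk : ∀ A ∈ S, ∀ B ∈ S, A ⊆ B → #(B \ A) ≤ k) : #S ≤ k + 1 := by
  rcases S.eq_empty_or_nonempty with rfl | hne
  · simp
  obtain ⟨A₀, hA₀, hmin⟩ := S.exists_min_image card hne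
  have hmaps : Set.MapsTo card (S : Set (Finset α)) (Icc #A₀ (#A₀ + k)) := by
    intro B hB
    refine mem_Icc.2 ⟨hmin B hB, ?_⟩
    rcases hS.total hA₀ hB with h | h
    · have := hk A₀ hA₀ B hB h
      have := card_sdiff_add_card_eq_card h
      omega
    · have := card_le_card h
      omega
  have hinj : Set.InjOn card (S : Set (Finset α)) := fun A hA B hB h =>
    (hS.total hA hB).elim (fun hAB => eq_of_subset_of_card_le hAB h.ge)
      fun hBA => (eq_of_subset_of_card_le hBA h.le).symm
  have := card_le_card_of_injOn card hmaps hinj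
  rw [Nat.card_Icc] at this
  omega

structure IsSymmChain (n : ℕ) (c : List (Finset ℕ)) : Prop where
  subset_range : ∀ A ∈ c, A ⊆ range n
  pairwise_ssubset : c.Pairwise (· ⊂ ·)
  exists_map_card : ∃ a, 2 * a ≤ n ∧ c.map card = List.range' a (n + 1 - 2 * a)

def extendChain (n : ℕ) (c : List (Finset ℕ)) : List (List (Finset ℕ)) :=
  match c.getLast? with
  | none => []
  | some x => (c ++ [insert n x]) :: if c.length ≤ 1 then [] else [c.dropLast.map (insert n)]

def symmChains : ℕ → List (List (Finset ℕ))
  | 0 => [[∅]]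
  | n + 1 => (symmChains n).flatMap (extendChain n)

theorem extendChain_concat (n : ℕ) (c : List (Finset ℕ)) (x : Finset ℕ) :
    extendChain n (c ++ [x]) =
      (c ++ [x, insert n x]) :: if c = [] then [] else [c.map (insert n)] := by
  simp [extendChain, List.length_pos_iff.symm]

namespace IsSymmChain

variable {n : ℕ} {c : List (Finset ℕ)} {x : Finset ℕ}

theorem ne_nil (h : IsSymmChain n c) : c ≠ [] := by
  obtain ⟨a, ha, hcard⟩ := h.exists_map_card
  rw [← List.length_pos_iff, ← List.length_map (f := card), hcard, List.length_range']
  omega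

theorem notMem (h : IsSymmChain n c) {A : Finset ℕ} (hA : A ∈ c) : n ∉ A :=
  fun hn => by simpa using h.subset_range A hA hn

theorem exists_map_card_concat (h : IsSymmChain n (c ++ [x])) :
    ∃ a, 2 * a ≤ n ∧ c.map card = List.range' a (n - 2 * a) ∧ #x = n - a := by
  obtain ⟨a, ha, hcard⟩ := h.exists_map_card
  rw [show n + 1 - 2 * a = n - 2 * a + 1 by omega, List.range'_concat, List.map_append] at hcard
  obtain ⟨hc, hx⟩ := List.append_inj' hcard rfl
  exact ⟨a, ha, hc, by simp at hx; omega⟩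

theorem append_insert (h : IsSymmChain n (c ++ [x])) :
    IsSymmChain (n + 1) (c ++ [x, insert n x]) where
  subset_range A hA := by
    rw [range_add_one]
    rcases List.mem_append.1 (show A ∈ (c ++ [x]) ++ [insert n x] by simpa using hA) with hA | hA
    · exact (h.subset_range A hA).trans (subset_insert _ _)
    · rw [List.mem_singleton.1 hA]
      exact insert_subset_insert _ (h.subset_range x (by simp))
  pairwise_ssubset := by
    have hx : x ⊂ insert n x := ssubset_insert (h.notMem (by simp))
    rw [show c ++ [x, insert n x] = (c ++ [x]) ++ [insert n x] by simp, List.pairwise_append]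
    refine ⟨h.pairwise_ssubset, List.pairwise_singleton _ _, fun A hA B hB => ?_⟩
    rw [List.mem_singleton.1 hB]
    rcases List.mem_append.1 hA with hA | hA
    · exact (List.pairwise_append.1 h.pairwise_ssubset).2.2 A hA x (by simp) |>.trans hx
    · rwa [List.mem_singleton.1 hA]
  exists_map_card := by
    obtain ⟨a, ha, hc, hx⟩ := h.exists_map_card_concat
    refine ⟨a, by omega, ?_⟩
    rw [show n + 1 + 1 - 2 * a = n - 2 * a + 1 + 1 by omega, List.range'_concat,
      List.range'_concat]
    simp [hc, hx, card_insert_of_notMem (h.notMem (A := x) (by simp))]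
    omega

theorem map_insert (h : IsSymmChain n (c ++ [x])) (hc : c ≠ []) :
    IsSymmChain (n + 1) (c.map (insert n)) where
  subset_range A hA := by
    obtain ⟨B, hB, rfl⟩ := List.mem_map.1 hA
    rw [range_add_one]
    exact insert_subset_insert _ (h.subset_range B (by simp [hB]))
  pairwise_ssubset :=
    List.pairwise_map.2 <| (List.pairwise_append.1 h.pairwise_ssubset).1.imp_of_mem
      fun _ hB hAB => insert_ssubset_insert_of_notMem (h.notMem (by simp [hB])) hAB
  exists_map_card := by
    obtain ⟨a, ha, hcard, -⟩ := h.exists_map_card_concat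
    have hlen : c.length = n - 2 * a := by simpa using congrArg List.length hcard
    have := List.length_pos_iff.2 hc
    refine ⟨a + 1, by omega, ?_⟩
    have hinsert : ∀ B ∈ c, (card ∘ insert n) B = ((1 + ·) ∘ card) B := fun B hB => by
      simp only [Function.comp_apply]
      rw [card_insert_of_notMem (h.notMem (A := B) (by simp [hB])), add_comm]
    rw [List.map_map, List.map_congr_left hinsert, ← List.map_map, hcard, List.map_add_range',
      show n + 1 + 1 - 2 * (a + 1) = n - 2 * a by omega, add_comm]

theorem of_mem_extendChain (h : IsSymmChain n c) {d : List (Finset ℕ)}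
    (hd : d ∈ extendChain n c) : IsSymmChain (n + 1) d := by
  obtain ⟨c, x, rfl⟩ := (List.eq_nil_or_concat c).resolve_left h.ne_nil
  rw [List.concat_eq_append] at h hd
  rw [extendChain_concat] at hd
  rcases List.mem_cons.1 hd with rfl | hd
  · exact h.append_insert
  · split_ifs at hd with hc
    · simp at hd
    · rw [List.mem_singleton.1 hd]
      exact h.map_insert hc

theorem countP_mem_le {k : ℕ} (hc : IsSymmChain n c) {F : Finset (Finset ℕ)}
    (hF : ∀ A ∈ F, ∀ B ∈ F, A ⊆ B → #(B \ A) ≤ k) :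
    c.countP (· ∈ F) ≤ c.countP (#· ∈ Icc ((n - k) / 2) ((n + k) / 2)) := by
  obtain ⟨a, ha, hcard⟩ := hc.exists_map_card
  have hnodup : c.Nodup := .of_map card (hcard ▸ List.nodup_range')
  have hle_length : c.countP (· ∈ F) ≤ n + 1 - 2 * a := by
    have := congrArg List.length hcard
    simp only [List.length_map, List.length_range'] at this
    exact this ▸ List.countP_le_length
  have hle_succ : c.countP (· ∈ F) ≤ k + 1 := by
    rw [hnodup.countP_eq_card_filter]
    refine IsChain.card_le_add_one_of_card_sdiff_le
      (hc.pairwise_ssubset.isChain_toFinset.mono (coe_subset.2 (filter_subset _ _)))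
      fun A hA B hB => ?_
    simp only [decide_eq_true_eq, mem_filter] at hA hB
    exact hF A hA.2 B hB.2
  have hlevels : c.countP (#· ∈ Icc ((n - k) / 2) ((n + k) / 2)) =
      #(Icc (max a ((n - k) / 2)) (min (n - a) ((n + k) / 2))) := by
    rw [show c.countP (#· ∈ Icc ((n - k) / 2) ((n + k) / 2)) =
        (c.map card).countP (· ∈ Icc ((n - k) / 2) ((n + k) / 2)) by rw [List.countP_map]; rfl,
      hcard, (List.nodup_range' (n := n + 1 - 2 * a)).countP_eq_card_filter,
      List.toFinset_range'_1]
    congr 1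
    ext i
    simp only [decide_eq_true_eq, mem_filter, mem_Ico, mem_Icc]
    omega
  rw [hlevels, Nat.card_Icc]
  -- Either the chain spans the whole window (`a ≤ (n - k) / 2`), or it lies inside it.
  omega

end IsSymmChain

theorem isSymmChain_of_mem_symmChains {n : ℕ} {c : List (Finset ℕ)} (hc : c ∈ symmChains n) :
    IsSymmChain n c := by
  induction n generalizing c with
  | zero =>
    rw [symmChains, List.mem_singleton] at hc
    subst hc
    exact ⟨by simp, by simp, ⟨0, by simp⟩⟩
  | succ n ih =>
    obtain ⟨d, hd, hc⟩ := List.mem_flatMap.1 hc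
    exact (ih hd).of_mem_extendChain hc

theorem flatten_extendChain_perm {n : ℕ} {c : List (Finset ℕ)} (hc : c ≠ []) :
    (extendChain n c).flatten.Perm (c ++ c.map (insert n)) := by
  obtain ⟨c, x, rfl⟩ := (List.eq_nil_or_concat c).resolve_left hc
  rw [List.concat_eq_append, extendChain_concat]
  split_ifs with hc
  · simp [hc]
  · simpa using ((List.perm_append_singleton _ _).symm.cons x).append_left c

theorem flatten_symmChains_succ_perm (n : ℕ) :
    (symmChains (n + 1)).flatten.Perm
      ((symmChains n).flatten ++ (symmChains n).flatten.map (insert n)) := by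
  rw [symmChains, ← List.flatMap_id, List.flatMap_assoc]
  simp only [List.flatMap_id]
  refine (List.Perm.flatMap_left _ fun c hc =>
    flatten_extendChain_perm (isSymmChain_of_mem_symmChains hc).ne_nil).trans ?_
  refine List.perm_iff_count.2 fun A => ?_
  simp [List.count_flatMap, List.count_flatten, List.map_flatten, List.sum_map_add,
    Function.comp_def]

theorem toFinset_flatten_symmChains (n : ℕ) :
    (symmChains n).flatten.toFinset = (range n).powerset := by
  induction n with
  | zero => simp [symmChains]
  | succ n ih =>
    have hmap : ∀ l : List (Finset ℕ),
        (l.map (insert n)).toFinset = l.toFinset.image (insert n) := fun l => by ext; simp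
    rw [List.toFinset_eq_of_perm _ _ (flatten_symmChains_succ_perm n), List.toFinset_append,
      hmap, ih, range_add_one, powerset_insert]

theorem nodup_flatten_symmChains (n : ℕ) : (symmChains n).flatten.Nodup := by
  induction n with
  | zero => simp [symmChains]
  | succ n ih =>
    have hn : ∀ A ∈ (symmChains n).flatten, n ∉ A := fun A hA hnA => by
      rw [← List.mem_toFinset, toFinset_flatten_symmChains, mem_powerset] at hA
      simpa using hA hnA
    rw [(flatten_symmChains_succ_perm n).nodup_iff, List.nodup_append]
    refine ⟨ih, ih.map_on fun A hA B hB => (insert_inj_of_notMem (hn A hA) (hn B hB)).1, ?_⟩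
    rintro A hA _ hB rfl
    obtain ⟨B, -, rfl⟩ := List.mem_map.1 hB
    exact hn _ hA (mem_insert_self n B)

theorem card_le_sum_choose_of_subset_powerset {n k : ℕ} {F : Finset (Finset ℕ)}
    (hFn : F ⊆ (range n).powerset) (hF : ∀ A ∈ F, ∀ B ∈ F, A ⊆ B → #(B \ A) ≤ k) :
    #F ≤ ∑ i ∈ Icc ((n - k) / 2) ((n + k) / 2), n.choose i := by
  have hnodup := nodup_flatten_symmChains n
  calc #F = (symmChains n).flatten.countP (· ∈ F) := by
        rw [hnodup.countP_eq_card_filter, toFinset_flatten_symmChains]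
        simp only [decide_eq_true_eq]
        rw [filter_mem_eq_inter, inter_eq_right.2 hFn]
    _ = ((symmChains n).map (List.countP (· ∈ F))).sum := List.countP_flatten
    _ ≤ ((symmChains n).map (List.countP (#· ∈ Icc ((n - k) / 2) ((n + k) / 2)))).sum :=
        List.sum_le_sum fun c hc => (isSymmChain_of_mem_symmChains hc).countP_mem_le hF
    _ = (symmChains n).flatten.countP (#· ∈ Icc ((n - k) / 2) ((n + k) / 2)) :=
        List.countP_flatten.symm
    _ = ∑ i ∈ Icc ((n - k) / 2) ((n + k) / 2), n.choose i := by
        rw [hnodup.countP_eq_card_filter, toFinset_flatten_symmChains]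
        simpa using card_filter_card_mem_powerset (range n) (Icc ((n - k) / 2) ((n + k) / 2))

theorem erdos_general (n k : ℕ) (F : Finset (Finset (Fin n)))
    (hF : ∀ A ∈ F, ∀ B ∈ F, A ⊂ B → ¬ (k < (B \ A).card)) :
    F.card ≤ ∑ i ∈ Finset.Icc ((n - k) / 2) ((n + k) / 2), n.choose i := by
  let e : Finset (Fin n) ↪o Finset ℕ := mapEmbedding Fin.valEmbedding
  have hsub : F.map e.toEmbedding ⊆ (range n).powerset := by
    simp [subset_iff, e]
  have hdiff : ∀ A ∈ F.map e.toEmbedding, ∀ B ∈ F.map e.toEmbedding, A ⊆ B → #(B \ A) ≤ k := by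
    simp only [mem_map]
    rintro _ ⟨A, hA, rfl⟩ _ ⟨B, hB, rfl⟩ hAB
    rcases (e.le_iff_le.1 hAB).eq_or_ssubset with rfl | hAB
    · simp
    · simpa [e, ← Finset.map_sdiff] using hF A hA B hB hAB
  simpa using card_le_sum_choose_of_subset_powerset hsub hdiff

/-- Erdős' theorem: if `F` contains no `A ⊂ B` with `|B \ A| > k`, then
`|F| ≤ ∑_{i=⌊(n-k)/2⌋}^{⌊(n+k)/2⌋} C(n,i)`. -/
theorem erdos (n k : ℕ) (hk : 0 < k) (F : Finset (Finset (Fin n)))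
    (hF : ∀ A ∈ F, ∀ B ∈ F, A ⊂ B → ¬ (k < (B \ A).card)) :
    F.card ≤ ∑ i ∈ Finset.Icc ((n - k) / 2) ((n + k) / 2), n.choose i :=
  erdos_general n k F hF
end

section
/- Let F ⊆ 2^[n] and suppose S is a real number such that for every full chain C in 2^[n], Σ_{G ∈ C ∩ F} C(n,|G|) ≤ S. Then |F| ≤ S. -/
/-!
Average the chain condition over the `n!` full chains `{σ 0, …, σ (i-1)}`, `σ ∈ Perm (Fin n)`.
Such a chain passes through a `k`-set `G` exactly when `σ` maps `{0, …, k-1}` onto `G`, which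
happens for `k! (n-k)!` permutations. So summing over all `σ` counts each `G ∈ F` with total
weight `C(n,k) k! (n-k)! = n!`, giving `n! |F| ≤ n! S`.
-/

open Finset Nat

namespace Equiv.Perm

variable {α : Type*}

def subtypeIffEquivProd (p q : α → Prop) [DecidablePred p] [DecidablePred q] :
    {σ : Perm α // ∀ x, p x ↔ q (σ x)} ≃
      ({x // p x} ≃ {x // q x}) × ({x // ¬p x} ≃ {x // ¬q x}) where
  toFun σ := (σ.1.subtypeEquiv σ.2, σ.1.subtypeEquiv fun x => not_congr (σ.2 x))
  invFun ef := ⟨Equiv.subtypeCongr ef.1 ef.2, fun x => by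
    by_cases hx : p x
    · simp [Equiv.subtypeCongr, hx, (ef.1 ⟨x, hx⟩).2]
    · simp [Equiv.subtypeCongr, hx, (ef.2 ⟨x, hx⟩).2]⟩
  left_inv := by
    rintro ⟨σ, hσ⟩
    ext x
    by_cases hx : p x
    all_goals simp [Equiv.subtypeCongr, hx]
  right_inv := by
    rintro ⟨e, f⟩
    ext x
    all_goals simp [Equiv.subtypeCongr, x.2]

theorem image_eq_iff_mem_iff [DecidableEq α] (σ : Perm α) (s t : Finset α) :
    s.image σ = t ↔ ∀ x, x ∈ s ↔ σ x ∈ t := by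
  rw [Finset.ext_iff, ← σ.forall_congr_right]
  simp

theorem card_filter_image_eq [Fintype α] [DecidableEq α] {s t : Finset α} (h : #s = #t) :
    #{σ : Perm α | s.image σ = t} = (#s)! * (Fintype.card α - #s)! := by
  have hmem : Fintype.card {x // x ∈ s} = Fintype.card {x // x ∈ t} := by simpa using h
  have hnotMem : Fintype.card {x // x ∉ s} = Fintype.card {x // x ∉ t} := by
    simp [Fintype.card_subtype_compl, h]
  simp_rw [image_eq_iff_mem_iff]
  rw [← Fintype.card_subtype, Fintype.card_congr (subtypeIffEquivProd _ _), Fintype.card_prod,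
    Fintype.card_equiv (Fintype.equivOfCardEq hmem),
    Fintype.card_equiv (Fintype.equivOfCardEq hnotMem), Fintype.card_subtype_compl,
    Fintype.card_coe]

end Equiv.Perm

open Equiv

-- The level-`i` set of `A` can only equal `G` when `i = #G`.
theorem sum_range_ite_mem_eq_sum_ite_eq {α M : Type*} [DecidableEq α] [AddCommMonoid M] {n : ℕ}
    {A : ℕ → Finset α} (hA : ∀ i ≤ n, #(A i) = i) {F : Finset (Finset α)}
    (hF : ∀ G ∈ F, #G ≤ n) (w : ℕ → M) :
    ∑ i ∈ range (n + 1), (if A i ∈ F then w i else 0) =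
      ∑ G ∈ F, if A #G = G then w #G else 0 := by
  have hlevel : ∀ G ∈ F, ∑ i ∈ range (n + 1), (if A i = G then w i else 0) =
      if A #G = G then w #G else 0 := by
    intro G hG
    rw [sum_eq_single_of_mem #G (mem_range_succ_iff.2 (hF G hG))]
    rintro i hi hne
    rw [if_neg]
    rintro rfl
    exact hne (hA i (mem_range_succ_iff.1 hi)).symm
  rw [← sum_congr rfl hlevel, sum_comm]
  exact sum_congr rfl fun i _ => (sum_ite_eq F (A i) fun _ => w i).symm

def permChain {n : ℕ} (σ : Perm (Fin n)) (i : ℕ) : Finset (Fin n) :=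
  ({j : Fin n | (j : ℕ) < i} : Finset (Fin n)).image σ

theorem card_permChain {n : ℕ} (σ : Perm (Fin n)) {i : ℕ} (hi : i ≤ n) : #(permChain σ i) = i := by
  rw [permChain, card_image_of_injective _ σ.injective, Fin.card_filter_val_lt, min_eq_right hi]

theorem permChain_subset_succ {n : ℕ} (σ : Perm (Fin n)) (i : ℕ) :
    permChain σ i ⊆ permChain σ (i + 1) :=
  image_subset_image fun j hj => by simp only [mem_filter_univ] at hj ⊢; omega

theorem card_filter_permChain_mul_choose {n : ℕ} (G : Finset (Fin n)) :
    #{σ : Perm (Fin n) | permChain σ #G = G} * n.choose #G = n ! := by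
  have hG : #G ≤ n := by simpa using G.card_le_univ
  have hinit : #({j : Fin n | (j : ℕ) < #G} : Finset (Fin n)) = #G := by
    rw [Fin.card_filter_val_lt, min_eq_right hG]
  change #{σ : Perm (Fin n) | ({j : Fin n | (j : ℕ) < #G} : Finset _).image σ = G} * _ = _
  rw [Perm.card_filter_image_eq hinit, hinit, Fintype.card_fin,
    ← Nat.choose_mul_factorial_mul_factorial hG]
  ring

/-- If for every full chain `C` in `2^[n]` we have `∑_{G ∈ C ∩ F} C(n,|G|) ≤ S`,
then `|F| ≤ S`. -/
theorem main_theorem (n : ℕ) (F : Finset (Finset (Fin n))) (S : ℝ)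
    (h : ∀ A : ℕ → Finset (Fin n), (∀ i ≤ n, (A i).card = i) →
      (∀ i < n, A i ⊆ A (i + 1)) →
      (∑ i ∈ Finset.range (n + 1), if A i ∈ F then (n.choose i : ℝ) else 0) ≤ S) :
    (F.card : ℝ) ≤ S := by
  have hF : ∀ G ∈ F, #G ≤ n := fun G _ => by simpa using G.card_le_univ
  have hchain (σ : Perm (Fin n)) :
      ∑ G ∈ F, (if permChain σ #G = G then (n.choose #G : ℝ) else 0) ≤ S := by
    rw [← sum_range_ite_mem_eq_sum_ite_eq (fun i => card_permChain σ) hF fun i => (n.choose i : ℝ)]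
    exact h _ (fun i => card_permChain σ) (fun i _ => permChain_subset_succ σ i)
  have hcount (G : Finset (Fin n)) :
      ∑ σ : Perm (Fin n), (if permChain σ #G = G then (n.choose #G : ℝ) else 0) = n ! := by
    rw [sum_ite, sum_const_zero, add_zero, sum_const, nsmul_eq_mul]
    exact_mod_cast card_filter_permChain_mul_choose G
  have hdouble : (n ! : ℝ) * #F ≤ n ! * S := calc
    (n ! : ℝ) * #F = ∑ G ∈ F, ∑ σ : Perm (Fin n),
        (if permChain σ #G = G then (n.choose #G : ℝ) else 0) := by simp [hcount, mul_comm]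
    _ = ∑ σ : Perm (Fin n), ∑ G ∈ F, (if permChain σ #G = G then (n.choose #G : ℝ) else 0) :=
        sum_comm
    _ ≤ ∑ _σ : Perm (Fin n), S := sum_le_sum fun σ _ => hchain σ
    _ = n ! * S := by simp [Fintype.card_perm]
  exact le_of_mul_le_mul_left hdouble (by positivity)
end

section
/- Fix n ≥ k ≥ 1. If H ⊆ {0,1,...,n} satisfies |h - h'| ≥ k for all distinct h,h' ∈ H, and H maximizes f(H) = Σ_{h∈H} C(n,h) among all such sets, then writing H = {h_1 < h_2 < ... < h_t}, we have h_1 < k, h_{i+1} - h_i = k for all 1 ≤ i < t, and h_t > n - k. -/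
/-!
A maximizer admits no improving local move. If its least element were `≥ k`, or its largest
`≤ n - k`, one more point could be added; if two consecutive elements `h < h'` were more than
`k` apart, moving `h` up to `h' - k` or `h'` down to `h + k` (whichever brings it closer to
`n / 2`) keeps the set separated and strictly increases the sum, by unimodality of `n.choose`.
-/

open Finset

namespace Nat

theorem choose_lt_succ_of_lt_half_left {n r : ℕ} (h : r < n / 2) :
    n.choose r < n.choose (r + 1) := by
  have hpos : 0 < n.choose r := choose_pos (by omega)
  refine Nat.lt_of_mul_lt_mul_right (a := r + 1) ?_
  rw [choose_succ_right_eq]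
  exact Nat.mul_lt_mul_of_pos_left (by omega) hpos

theorem choose_strictMonoOn_Iic_half (n : ℕ) : StrictMonoOn n.choose (Set.Iic (n / 2)) :=
  strictMonoOn_Iic_of_lt_succ fun _ hm => choose_lt_succ_of_lt_half_left hm

theorem choose_lt_choose_of_lt_of_add_lt {n a b : ℕ} (hab : a < b) (h : a + b < n) :
    n.choose a < n.choose b := by
  rcases le_or_gt b (n / 2) with hb | hb
  · exact choose_strictMonoOn_Iic_half n (Set.mem_Iic.mpr (by omega)) hb hab
  · rw [← choose_symm (by omega : b ≤ n)]
    exact choose_strictMonoOn_Iic_half n (Set.mem_Iic.mpr (by omega))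
      (Set.mem_Iic.mpr (by omega)) (by omega)

theorem choose_lt_choose_of_lt_of_lt_add {n a b : ℕ} (hab : a < b) (hb : b ≤ n)
    (h : n < a + b) : n.choose b < n.choose a := by
  rw [← choose_symm hb, ← choose_symm (hab.le.trans hb)]
  exact choose_lt_choose_of_lt_of_add_lt (by omega) (by omega)

end Nat

theorem intCast_le_abs_sub_iff {k a b : ℕ} :
    (k : ℤ) ≤ |(a : ℤ) - (b : ℤ)| ↔ a + k ≤ b ∨ b + k ≤ a := by
  rw [le_abs]
  omega

def IsSeparated (k : ℕ) (H : Finset ℕ) : Prop :=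
  ∀ h ∈ H, ∀ h' ∈ H, h ≠ h' → (k : ℤ) ≤ |(h : ℤ) - (h' : ℤ)|

structure IsMaximizer (n k : ℕ) (H : Finset ℕ) : Prop where
  subset : H ⊆ range (n + 1)
  separated : IsSeparated k H
  sum_le : ∀ H' : Finset ℕ, H' ⊆ range (n + 1) → IsSeparated k H' →
    ∑ h ∈ H', n.choose h ≤ ∑ h ∈ H, n.choose h

section

variable {n k : ℕ} {H : Finset ℕ}

namespace IsSeparated

theorem add_le_of_lt (hH : IsSeparated k H) {a b : ℕ} (ha : a ∈ H) (hb : b ∈ H) (hab : a < b) :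
    a + k ≤ b := by
  have := intCast_le_abs_sub_iff.mp (hH a ha b hb hab.ne)
  omega

theorem insert_erase (hH : IsSeparated k H) {x y : ℕ}
    (hx : ∀ b ∈ H, b ≠ y → x + k ≤ b ∨ b + k ≤ x) : IsSeparated k (insert x (H.erase y)) := by
  intro a ha b hb hab
  rw [intCast_le_abs_sub_iff]
  rcases mem_insert.mp ha with rfl | ha' <;> rcases mem_insert.mp hb with rfl | hb'
  · exact absurd rfl hab
  · exact hx b (mem_of_mem_erase hb') (ne_of_mem_erase hb')
  · exact (hx a (mem_of_mem_erase ha') (ne_of_mem_erase ha')).symm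
  · exact intCast_le_abs_sub_iff.mp (hH a (mem_of_mem_erase ha') b (mem_of_mem_erase hb') hab)

end IsSeparated

namespace IsMaximizer

variable (hH : IsMaximizer n k H)
include hH

theorem le_of_mem {h : ℕ} (hh : h ∈ H) : h ≤ n :=
  Nat.lt_succ_iff.mp (mem_range.mp (hH.subset hh))

theorem choose_add_sum_erase_le (hk : 1 ≤ k) {x y : ℕ} (hx : x ≤ n)
    (hfar : ∀ b ∈ H, b ≠ y → x + k ≤ b ∨ b + k ≤ x) :
    n.choose x + ∑ h ∈ H.erase y, n.choose h ≤ ∑ h ∈ H, n.choose h := by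
  have hxH : x ∉ H.erase y := fun hxH => by
    have := hfar x (mem_of_mem_erase hxH) (ne_of_mem_erase hxH)
    omega
  rw [← sum_insert hxH]
  refine hH.sum_le _ ?_ (hH.separated.insert_erase hfar)
  exact insert_subset (mem_range.mpr (by omega)) ((erase_subset y H).trans hH.subset)

theorem choose_le_of_exchange (hk : 1 ≤ k) {x y : ℕ} (hy : y ∈ H) (hx : x ≤ n)
    (hfar : ∀ b ∈ H, b ≠ y → x + k ≤ b ∨ b + k ≤ x) : n.choose x ≤ n.choose y := by
  have := hH.choose_add_sum_erase_le hk hx hfar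
  rw [← sum_erase_add H _ hy] at this
  omega

theorem exists_mem_near (hk : 1 ≤ k) {x : ℕ} (hx : x ≤ n) : ∃ b ∈ H, b < x + k ∧ x < b + k := by
  by_contra! hfar
  have hfar' : ∀ b ∈ H, x + k ≤ b ∨ b + k ≤ x := fun b hb => by
    have := hfar b hb
    omega
  have hxH : x ∉ H := fun hxH => by
    have := hfar' x hxH
    omega
  have := hH.choose_add_sum_erase_le (y := x) hk hx fun b hb _ => hfar' b hb
  rw [erase_eq_of_notMem hxH] at this
  have := Nat.choose_pos hx
  omega

theorem sub_eq_of_consecutive (hk : 1 ≤ k) {h h' : ℕ} (hh : h ∈ H) (hh' : h' ∈ H) (hlt : h < h')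
    (hcons : ∀ x ∈ H, x ≤ h ∨ h' ≤ x) : h' - h = k := by
  have hsep := hH.separated.add_le_of_lt hh hh' hlt
  have hh'n := hH.le_of_mem hh'
  by_contra hne
  rcases lt_or_ge n (h + k + h') with hc | hc
  · have := hH.choose_le_of_exchange hk hh' (x := h + k) (by omega) fun b hb hbh' => by
      rcases hcons b hb with hb' | hb'
      · omega
      · have := hH.separated.add_le_of_lt hh' hb (by omega)
        omega
    have := Nat.choose_lt_choose_of_lt_of_lt_add (by omega : h + k < h') hh'n hc
    omega
  · have := hH.choose_le_of_exchange hk hh (x := h' - k) (by omega) fun b hb hbh => by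
      rcases hcons b hb with hb' | hb'
      · have := hH.separated.add_le_of_lt hb hh (by omega)
        omega
      · omega
    have := Nat.choose_lt_choose_of_lt_of_add_lt (n := n) (by omega : h < h' - k) (by omega)
    omega

end IsMaximizer

end

/-- If `H ⊆ {0,…,n}` has pairwise distances `≥ k` and maximizes `∑_{h∈H} C(n,h)`,
then its least element is `< k`, consecutive elements differ by exactly `k`,
and its largest element is `> n - k`. -/
theorem maximizer_structure (n k : ℕ) (hk : 1 ≤ k) (hn : k ≤ n)
    (H : Finset ℕ) (hH : H ⊆ Finset.range (n + 1))
    (hdist : ∀ h ∈ H, ∀ h' ∈ H, h ≠ h' → (k : ℤ) ≤ |(h : ℤ) - (h' : ℤ)|)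
    (hmax : ∀ H' : Finset ℕ, H' ⊆ Finset.range (n + 1) →
      (∀ h ∈ H', ∀ h' ∈ H', h ≠ h' → (k : ℤ) ≤ |(h : ℤ) - (h' : ℤ)|) →
      ∑ h ∈ H', n.choose h ≤ ∑ h ∈ H, n.choose h) :
    (∀ h ∈ H, (∀ h' ∈ H, h ≤ h') → h < k) ∧
    (∀ h ∈ H, ∀ h' ∈ H, h < h' → (∀ x ∈ H, x ≤ h ∨ h' ≤ x) → h' - h = k) ∧
    (∀ h ∈ H, (∀ h' ∈ H, h' ≤ h) → n - k < h) := by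
  have hM : IsMaximizer n k H := ⟨hH, hdist, hmax⟩
  refine ⟨fun h hh hmin => ?_, fun h hh h' hh' => hM.sub_eq_of_consecutive hk hh hh', ?_⟩
  · by_contra! hkh
    have := hM.le_of_mem hh
    obtain ⟨b, hb, hbh, -⟩ := hM.exists_mem_near hk (x := h - k) (by omega)
    have := hmin b hb
    omega
  · intro h hh hmaxel
    by_contra! hhk
    obtain ⟨b, hb, -, hhb⟩ := hM.exists_mem_near hk (x := h + k) (by omega)
    have := hmaxel b hb
    omega
end

section
/- Fix n ≥ k ≥ 1. For every H ⊆ {0,...,n} with |h - h'| ≥ k for all distinct h,h' ∈ H, we have Σ_{h∈H} C(n,h) ≤ Σ_{i ∈ [0,n], i ≡ ⌊n/2⌋ (mod k)} C(n,i). -/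
/-!
Rounding every `h ∈ H` towards the element `a ∈ H` nearest to `n / 2`, onto the residue class of
`a` mod `k`, is injective on the `k`-separated set `H` and does not decrease `C(n, h)`; so `H` is
beaten by a full residue class. The sum over the class of `r` counts the `±1`-walks of length `n`
on `ℤ/2k` that end at `2r - n`. By induction on `n` (Pascal's rule is one step of the walk) this
count is even in `t` and decreases along `t, t + 2, …` as long as `t ≤ k`, so among endpoints of
the parity of `n` it is largest at `n mod 2 = -(2⌊n/2⌋ - n)`.
-/

open Finset

theorem Nat.choose_le_choose_of_le_half {n i j : ℕ} (hij : i ≤ j) (hj : j ≤ n / 2) :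
    n.choose i ≤ n.choose j := by
  induction j, hij using Nat.le_induction with
  | base => rfl
  | succ j _ ih => exact (ih (by omega)).trans (Nat.choose_le_succ_of_lt_half_left (by omega))

theorem Nat.choose_le_choose_of_dist_le {n i j : ℕ} (h : (2 * j).dist n ≤ (2 * i).dist n) :
    n.choose i ≤ n.choose j := by
  unfold Nat.dist at h
  rcases le_or_gt i n with hin | hin
  · have hjn : j ≤ n := by omega
    have choose_eq_min : ∀ l ≤ n, n.choose l = n.choose (min l (n - l)) := fun l hl => by
      rcases le_total l (n - l) with h' | h'
      · rw [min_eq_left h']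
      · rw [min_eq_right h', Nat.choose_symm hl]
    rw [choose_eq_min i hin, choose_eq_min j hjn]
    exact Nat.choose_le_choose_of_le_half (by omega) (by omega)
  · simp [Nat.choose_eq_zero_of_lt hin]

def roundToward (k a h : ℕ) : ℕ :=
  if h ≤ a then a - (a - h) / k * k else a + (h - a) / k * k

theorem roundToward_mod (k a h : ℕ) : roundToward k a h % k = a % k := by
  unfold roundToward
  split_ifs
  · rw [mul_comm, Nat.sub_mul_mod ((Nat.mul_div_le _ _).trans (Nat.sub_le _ _))]
  · exact Nat.add_mul_mod_self_right _ _ _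

theorem roundToward_mem_uIcc (k a h : ℕ) : roundToward k a h ∈ Set.uIcc h a := by
  rw [Set.mem_uIcc]
  unfold roundToward
  split_ifs
  · have := Nat.div_mul_le_self (a - h) k
    omega
  · have := Nat.div_mul_le_self (h - a) k
    omega

theorem dist_roundToward_lt {k : ℕ} (hk : 0 < k) (a h : ℕ) :
    h.dist (roundToward k a h) < k := by
  unfold roundToward Nat.dist
  split_ifs
  · have := Nat.div_mul_le_self (a - h) k
    have := Nat.lt_div_mul_add (a := a - h) hk
    omega
  · have := Nat.div_mul_le_self (h - a) k
    have := Nat.lt_div_mul_add (a := h - a) hk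
    omega

theorem roundToward_injOn {k a : ℕ} (hk : 0 < k) {H : Set ℕ} (ha : a ∈ H)
    (hsep : H.Pairwise fun x y => k ≤ x.dist y) : Set.InjOn (roundToward k a) H := by
  intro x hx y hy hxy
  by_contra hne
  have hxy' := hsep hx hy hne
  have hxa : x ≠ a → k ≤ x.dist a := hsep hx ha
  have hya : y ≠ a → k ≤ y.dist a := hsep hy ha
  have hxf := dist_roundToward_lt hk a x
  have hyf := dist_roundToward_lt hk a y
  have hx' := roundToward_mem_uIcc k a x
  have hy' := roundToward_mem_uIcc k a y
  rw [Set.mem_uIcc] at hx' hy'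
  unfold Nat.dist at *
  omega

theorem exists_sum_choose_le_sum_filter_mod {n k : ℕ} (hk : 0 < k) {H : Finset ℕ}
    (hH : H ⊆ range (n + 1)) (hsep : (H : Set ℕ).Pairwise fun x y => k ≤ x.dist y) :
    ∃ r, ∑ h ∈ H, n.choose h ≤
      ∑ i ∈ (range (n + 1)).filter (fun i => i % k = r % k), n.choose i := by
  rcases H.eq_empty_or_nonempty with rfl | hne
  · exact ⟨0, by simp⟩
  obtain ⟨a, ha, hmin⟩ := H.exists_min_image (fun h => (2 * h).dist n) hne
  refine ⟨a, ?_⟩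
  have hrange : ∀ h ∈ H, h ≤ n := fun h hh => Nat.lt_succ_iff.mp (mem_range.mp (hH hh))
  calc ∑ h ∈ H, n.choose h ≤ ∑ h ∈ H, n.choose (roundToward k a h) := by
        refine sum_le_sum fun h hh => Nat.choose_le_choose_of_dist_le ?_
        have := hmin h hh
        have := roundToward_mem_uIcc k a h
        rw [Set.mem_uIcc] at this
        unfold Nat.dist at *
        omega
    _ = ∑ i ∈ H.image (roundToward k a), n.choose i :=
        (sum_image (roundToward_injOn hk (mem_coe.mpr ha) hsep)).symm
    _ ≤ _ := by
        refine sum_le_sum_of_subset (image_subset_iff.mpr fun h hh => mem_filter.mpr ⟨?_, ?_⟩)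
        · have := roundToward_mem_uIcc k a h
          rw [Set.mem_uIcc] at this
          have := hrange h hh
          have := hrange a ha
          rw [mem_range]; omega
        · exact roundToward_mod k a h

def cyclicWalkCount (m n : ℕ) (t : ZMod m) : ℕ :=
  ∑ p ∈ (antidiagonal n).filter (fun p => (p.1 : ZMod m) - p.2 = t), n.choose p.1

theorem cyclicWalkCount_neg (m n : ℕ) (t : ZMod m) :
    cyclicWalkCount m n (-t) = cyclicWalkCount m n t := by
  rw [cyclicWalkCount, sum_filter, ← Nat.sum_antidiagonal_swap, cyclicWalkCount, sum_filter]
  refine sum_congr rfl fun p hp => ?_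
  rw [HasAntidiagonal.mem_antidiagonal] at hp
  rw [Prod.fst_swap, Prod.snd_swap, ← neg_sub, Nat.choose_symm_of_eq_add hp.symm]
  simp only [neg_inj]

theorem cyclicWalkCount_succ (m n : ℕ) (t : ZMod m) :
    cyclicWalkCount m (n + 1) t = cyclicWalkCount m n (t + 1) + cyclicWalkCount m n (t - 1) := by
  have pascal := sum_antidiagonal_choose_succ_nsmul (M := ℕ)
    (fun i j => if (i : ZMod m) - j = t then 1 else 0) n
  simp only [smul_eq_mul, mul_boole] at pascal
  simp only [cyclicWalkCount, sum_filter, pascal]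
  congr 1
  · refine sum_congr rfl fun p _ => ?_
    simp only [Nat.cast_add, Nat.cast_one, sub_add_eq_sub_sub, sub_eq_iff_eq_add]
  · refine sum_congr rfl fun p hp => ?_
    rw [HasAntidiagonal.mem_antidiagonal] at hp
    simp only [Nat.choose_symm_of_eq_add hp.symm, Nat.cast_add, Nat.cast_one, add_sub_right_comm,
      ← eq_sub_iff_add_eq]

theorem cyclicWalkCount_add_two_le {k : ℕ} (n : ℕ) {t : ℕ} (ht : t + 2 ≤ k) :
    cyclicWalkCount (2 * k) n (t + 2) ≤ cyclicWalkCount (2 * k) n t := by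
  induction n generalizing t with
  | zero =>
    have hne : ((t + 2 : ℕ) : ZMod (2 * k)) ≠ 0 := by
      rw [Ne, ZMod.natCast_eq_zero_iff]
      exact Nat.not_dvd_of_pos_of_lt (by omega) (by omega)
    push_cast at hne
    simp [cyclicWalkCount, filter_singleton, hne.symm]
  | succ n ih =>
    have outer : cyclicWalkCount (2 * k) n (t + 3) ≤ cyclicWalkCount (2 * k) n (t + 1) := by
      by_cases htk : t + 3 ≤ k
      · exact_mod_cast ih (t := t + 1) htk
      · obtain rfl : k = t + 2 := by omega
        rw [← cyclicWalkCount_neg]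
        apply le_of_eq; congr 1
        have hzero := ZMod.natCast_self (2 * (t + 2))
        push_cast at hzero
        linear_combination -hzero
    have inner : cyclicWalkCount (2 * k) n (t + 1) ≤ cyclicWalkCount (2 * k) n (t - 1) := by
      cases t with
      | zero => rw [← cyclicWalkCount_neg]; apply le_of_eq; congr 1; push_cast; ring
      | succ s => convert ih (t := s) (by omega) using 2 <;> push_cast <;> ring
    rw [cyclicWalkCount_succ, cyclicWalkCount_succ]
    ring_nf at outer inner ⊢
    omega

theorem cyclicWalkCount_le_of_le_of_mod_two_eq {k n s t : ℕ} (hst : s ≤ t) (htk : t ≤ k)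
    (hpar : s % 2 = t % 2) : cyclicWalkCount (2 * k) n t ≤ cyclicWalkCount (2 * k) n s := by
  obtain ⟨j, rfl⟩ : ∃ j, t = s + 2 * j := ⟨(t - s) / 2, by omega⟩
  induction j with
  | zero => simp
  | succ j ih =>
    calc cyclicWalkCount (2 * k) n ↑(s + 2 * (j + 1))
        ≤ cyclicWalkCount (2 * k) n ↑(s + 2 * j) := by
          convert cyclicWalkCount_add_two_le n (t := s + 2 * j) (by omega) using 2
          push_cast; ring
      _ ≤ cyclicWalkCount (2 * k) n s := ih (by omega) (by omega) (by omega)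

theorem cyclicWalkCount_le_mod_two {k : ℕ} (hk : 0 < k) (n r : ℕ) :
    cyclicWalkCount (2 * k) n (2 * r - n) ≤ cyclicWalkCount (2 * k) n (n % 2 : ℕ) := by
  have : NeZero (2 * k) := ⟨by omega⟩
  set x : ZMod (2 * k) := 2 * r - n
  have hx : (x.val : ZMod (2 * k)) = x := ZMod.natCast_zmod_val x
  have hlt : x.val < 2 * k := ZMod.val_lt x
  have hpar : n % 2 = x.val % 2 := by
    have hmod : x.val + n ≡ 2 * r [MOD 2 * k] := by
      rw [← ZMod.natCast_eq_natCast_iff]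
      push_cast
      rw [hx]; ring
    have := hmod.of_mul_right k
    unfold Nat.ModEq at this
    omega
  by_cases hxk : x.val ≤ k
  · rw [← hx]
    exact cyclicWalkCount_le_of_le_of_mod_two_eq (by omega) hxk (by omega)
  · have hneg : ((2 * k - x.val : ℕ) : ZMod (2 * k)) = -x := by
      rw [Nat.cast_sub hlt.le, ZMod.natCast_self, hx, zero_sub]
    rw [← cyclicWalkCount_neg, ← hneg]
    exact cyclicWalkCount_le_of_le_of_mod_two_eq (by omega) (by omega) (by omega)

theorem sum_choose_filter_mod_eq_cyclicWalkCount (k n r : ℕ) :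
    ∑ i ∈ (range (n + 1)).filter (fun i => i % k = r % k), n.choose i =
      cyclicWalkCount (2 * k) n (2 * r - n) := by
  rw [cyclicWalkCount, sum_filter, sum_filter, Nat.sum_antidiagonal_eq_sum_range_succ_mk]
  refine sum_congr rfl fun i hi => ?_
  have hin : i ≤ n := Nat.lt_succ_iff.mp (mem_range.mp hi)
  have hcond : i % k = r % k ↔ (i : ZMod (2 * k)) - (n - i : ℕ) = 2 * r - n := by
    rw [Nat.cast_sub hin, sub_sub_eq_add_sub, sub_left_inj, ← two_mul,
      show (2 : ZMod (2 * k)) * i = (2 * i : ℕ) by push_cast; ring,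
      show (2 : ZMod (2 * k)) * r = (2 * r : ℕ) by push_cast; ring,
      ZMod.natCast_eq_natCast_iff', Nat.mul_mod_mul_left, Nat.mul_mod_mul_left]
    omega
  simp only [hcond]

theorem sum_choose_filter_mod_le_mid {k : ℕ} (hk : 0 < k) (n r : ℕ) :
    ∑ i ∈ (range (n + 1)).filter (fun i => i % k = r % k), n.choose i ≤
      ∑ i ∈ (range (n + 1)).filter (fun i => i % k = n / 2 % k), n.choose i := by
  have hmid : 2 * ((n / 2 : ℕ) : ZMod (2 * k)) - n = -((n % 2 : ℕ) : ZMod (2 * k)) := by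
    have := congrArg (Nat.cast (R := ZMod (2 * k))) (Nat.div_add_mod n 2)
    push_cast at this
    linear_combination this
  rw [sum_choose_filter_mod_eq_cyclicWalkCount, sum_choose_filter_mod_eq_cyclicWalkCount, hmid,
    cyclicWalkCount_neg]
  exact cyclicWalkCount_le_mod_two hk n r

theorem residue_class_maximizes_general (n k : ℕ) (hk : 1 ≤ k)
    (H : Finset ℕ) (hH : H ⊆ Finset.range (n + 1))
    (hdist : ∀ h ∈ H, ∀ h' ∈ H, h ≠ h' → (k : ℤ) ≤ |(h : ℤ) - (h' : ℤ)|) :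
    ∑ h ∈ H, n.choose h ≤
      ∑ i ∈ (Finset.range (n + 1)).filter (fun i => i % k = (n / 2) % k),
        n.choose i := by
  have hsep : (H : Set ℕ).Pairwise fun x y => k ≤ x.dist y := fun x hx y hy hxy => by
    have := hdist x hx y hy hxy
    rw [le_abs'] at this
    unfold Nat.dist
    omega
  obtain ⟨r, hr⟩ := exists_sum_choose_le_sum_filter_mod hk hH hsep
  exact hr.trans (sum_choose_filter_mod_le_mid hk n r)

/-- For every `H ⊆ {0,…,n}` with pairwise distances `≥ k`,
`∑_{h∈H} C(n,h) ≤ ∑_{i ∈ [0,n], i ≡ ⌊n/2⌋ (mod k)} C(n,i)`. -/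
theorem residue_class_maximizes (n k : ℕ) (hk : 1 ≤ k) (hn : k ≤ n)
    (H : Finset ℕ) (hH : H ⊆ Finset.range (n + 1))
    (hdist : ∀ h ∈ H, ∀ h' ∈ H, h ≠ h' → (k : ℤ) ≤ |(h : ℤ) - (h' : ℤ)|) :
    ∑ h ∈ H, n.choose h ≤
      ∑ i ∈ (Finset.range (n + 1)).filter (fun i => i % k = (n / 2) % k),
        n.choose i :=
  residue_class_maximizes_general n k hk H hH hdist
end

section
/- Let k ≥ 3 and n ≥ k. For a real a with |a| ≤ k/2 and n/2 + a ∈ ℤ, let H_a^n = { i ∈ [0,n] : i ≡ n/2 + a (mod k) } and f(H_a^n) = Σ_{i ∈ H_a^n} C(n,i). If |a| < |b| ≤ k/2 with n/2+a, n/2+b ∈ ℤ, then f(H_a^n) > f(H_b^n). -/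
/-!
Write `S n r` for the binomial mass of the residue class of `r` mod `k` in `[0, n]`. It is
invariant under `r ↦ n - r` and `r ↦ r + k`, and satisfies Pascal's rule
`S (n + 1) r = S n (r - 1) + S n r`. By induction on `n ≥ k - 1`, `S n` is strictly decreasing
on the window `n/2 ≤ r ≤ (n + k)/2`. For `n = k - 1` every class meets `[0, n]` in one point,
so this is the unimodality of `n.choose`. In the step, Pascal's rule turns
`S (n + 1) (r + 1) < S (n + 1) r` into `S n (r + 1) < S n (r - 1)`; the two symmetries extend
the monotonicity of `S n` weakly by one step past each end of the window, and `k ≥ 3` ensures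
that at least one of the comparisons `S n (r + 1) ≤ S n r ≤ S n (r - 1)` is strict.
Reflecting `p` and `q` into the window gives the theorem.
-/

open Finset

def residueChooseSum (k n : ℕ) (r : ℤ) : ℕ :=
  ∑ i ∈ (range (n + 1)).filter (fun i : ℕ => (i : ℤ) % k = r % k), n.choose i

theorem Nat.choose_succ_lt_choose {n r : ℕ} (h : n ≤ 2 * r) (hr : r ≤ n) :
    n.choose (r + 1) < n.choose r := by
  by_contra! hle
  have hlt : n.choose r * (n - r) < n.choose (r + 1) * (r + 1) :=
    calc n.choose r * (n - r) < n.choose r * (r + 1) :=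
          Nat.mul_lt_mul_of_pos_left (by omega) (Nat.choose_pos hr)
      _ ≤ n.choose (r + 1) * (r + 1) := Nat.mul_le_mul_right _ hle
  rw [Nat.choose_succ_right_eq] at hlt
  exact lt_irrefl _ hlt

namespace residueChooseSum

variable {k n : ℕ}

theorem congr_modEq {r s : ℤ} (h : r ≡ s [ZMOD k]) :
    residueChooseSum k n r = residueChooseSum k n s := by
  unfold residueChooseSum; rw [h]

theorem reflect (k n : ℕ) (r : ℤ) : residueChooseSum k n (n - r) = residueChooseSum k n r := by
  simp only [residueChooseSum, sum_filter]
  refine (sum_range_reflect _ _).symm.trans (sum_congr rfl fun i hi => ?_)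
  have hi : i ≤ n := Nat.lt_succ_iff.mp (mem_range.mp hi)
  have hcond : (n - i : ℤ) ≡ n - r [ZMOD k] ↔ (i : ℤ) ≡ r [ZMOD k] := by
    rw [Int.modEq_iff_dvd, Int.modEq_iff_dvd, ← dvd_neg]; ring_nf
  rw [Nat.add_sub_cancel, Nat.choose_symm hi, Nat.cast_sub hi]
  exact if_congr hcond rfl rfl

theorem eq_of_add_modEq {p q : ℤ} (h : p + q ≡ n [ZMOD k]) :
    residueChooseSum k n p = residueChooseSum k n q := by
  rw [← reflect k n p]
  exact congr_modEq (Int.ModEq.symm (by simpa using (Int.ModEq.sub_right p h)))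

theorem succ (k n : ℕ) (r : ℤ) :
    residueChooseSum k (n + 1) r = residueChooseSum k n (r - 1) + residueChooseSum k n r := by
  simp only [residueChooseSum, sum_filter]
  set g : ℤ → ℕ → ℕ := fun s i => if (i : ℤ) % k = s % k then n.choose i else 0 with hg
  have pascal : ∀ i : ℕ,
      (if ((i + 1 : ℕ) : ℤ) % k = r % k then (n + 1).choose (i + 1) else 0)
        = g (r - 1) i + g r (i + 1) := by
    intro i
    have hcond : ((i + 1 : ℕ) : ℤ) % k = r % k ↔ (i : ℤ) % k = (r - 1) % k := by
      change _ ≡ _ [ZMOD k] ↔ _ ≡ _ [ZMOD k]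
      rw [Int.modEq_iff_dvd, Int.modEq_iff_dvd]; push_cast; ring_nf
    simp only [hg, Nat.choose_succ_succ', hcond]
    split_ifs <;> rfl
  calc _ = ∑ i ∈ range (n + 1), (g (r - 1) i + g r (i + 1)) + g r 0 := by
          rw [sum_range_succ', sum_congr rfl fun i _ => pascal i]; simp [hg]
    _ = ∑ i ∈ range (n + 1), g (r - 1) i + ∑ i ∈ range (n + 1 + 1), g r i := by
          rw [sum_add_distrib, add_assoc, sum_range_succ' (g r)]
    _ = _ := by
          rw [sum_range_succ (g r)]; simp [hg]

theorem eq_choose_of_lt (hn : n < k) {r : ℕ} (hr : r ≤ n) :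
    residueChooseSum k n r = n.choose r := by
  have hclass : (range (n + 1)).filter (fun i : ℕ => (i : ℤ) % k = (r : ℤ) % k) = {r} := by
    ext i
    simp only [mem_filter, mem_range, mem_singleton]
    constructor
    · rintro ⟨hi, hmod⟩
      rw [Int.emod_eq_of_lt (by positivity) (by omega),
        Int.emod_eq_of_lt (by positivity) (by omega)] at hmod
      exact_mod_cast hmod
    · rintro rfl; exact ⟨by omega, rfl⟩
  rw [residueChooseSum, hclass, sum_singleton]

/-- The residues `n/2 + a` with `0 ≤ a ≤ k/2`. -/
def window (k n : ℕ) : Set ℤ := {r | (n : ℤ) ≤ 2 * r ∧ 2 * r ≤ n + k}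

theorem ordConnected_window (k n : ℕ) : (window k n).OrdConnected :=
  ⟨fun _ hx _ hy _ hz => ⟨by linarith [hx.1, hz.1], by linarith [hy.2, hz.2]⟩⟩

theorem strictAntiOn_of_succ_eq (hn : n + 1 = k) :
    StrictAntiOn (residueChooseSum k n) (window k n) := by
  refine strictAntiOn_of_add_one_lt (ordConnected_window k n) fun r _ hr hr' => ?_
  lift r to ℕ using by have := hr.1; omega
  have hr₁ : r + 1 ≤ n := by have := hr'.2; omega
  rw [← Nat.cast_succ, eq_choose_of_lt (by omega) hr₁, eq_choose_of_lt (by omega) (by omega)]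
  exact Nat.choose_succ_lt_choose (by have := hr.1; omega) (by omega)

theorem succ_le_of_strictAntiOn (h : StrictAntiOn (residueChooseSum k n) (window k n)) {r : ℤ}
    (h₁ : (n : ℤ) ≤ 2 * r + 1) (h₂ : 2 * r + 1 ≤ n + k) :
    residueChooseSum k n (r + 1) ≤ residueChooseSum k n r := by
  by_cases hin : (n : ℤ) ≤ 2 * r ∧ 2 * r + 2 ≤ n + k
  · exact (h ⟨hin.1, by omega⟩ ⟨by omega, by omega⟩ (lt_add_one r)).le
  · -- at either edge, `r + 1` and `r` are mirror images: `(r + 1) + r ≡ n [ZMOD k]`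
    refine (eq_of_add_modEq (Int.modEq_iff_dvd.mpr ?_)).le
    rcases (by omega : 2 * r + 1 = n ∨ 2 * r + 1 = n + k) with hedge | hedge
    · exact ⟨0, by omega⟩
    · exact ⟨-1, by omega⟩

theorem strictAntiOn_succ (hk : 3 ≤ k) (h : StrictAntiOn (residueChooseSum k n) (window k n)) :
    StrictAntiOn (residueChooseSum k (n + 1)) (window k (n + 1)) := by
  refine strictAntiOn_of_add_one_lt (ordConnected_window k _) fun r _ hr hr' => ?_
  have hr₁ := hr.1
  have hr₂ := hr'.2
  push_cast at hr₁ hr₂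
  suffices residueChooseSum k n (r + 1) < residueChooseSum k n (r - 1) by
    rw [succ, succ, add_sub_cancel_right]; omega
  have hdown : residueChooseSum k n r ≤ residueChooseSum k n (r - 1) := by
    simpa using succ_le_of_strictAntiOn h (r := r - 1) (by omega) (by omega)
  rcases (by omega : 2 * r + 2 ≤ n + k ∨ 2 * r + 1 = n + k) with hlt | hedge
  · exact (h ⟨by omega, by omega⟩ ⟨by omega, by omega⟩ (lt_add_one r)).trans_le hdown
  · exact (succ_le_of_strictAntiOn h (by omega) (by omega)).trans_lt
      (h ⟨by omega, by omega⟩ ⟨by omega, by omega⟩ (sub_one_lt r))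

theorem strictAntiOn (hk : 3 ≤ k) (hn : k ≤ n + 1) :
    StrictAntiOn (residueChooseSum k n) (window k n) := by
  induction n with
  | zero => omega
  | succ n ih =>
    rcases (by omega : k ≤ n + 1 ∨ n + 1 + 1 = k) with hkn | hkn
    · exact strictAntiOn_succ hk (ih hkn)
    · exact strictAntiOn_of_succ_eq hkn

theorem exists_two_mul_sub_eq_abs (k n : ℕ) (r : ℤ) :
    ∃ s : ℤ, 2 * s - n = |2 * r - n| ∧ residueChooseSum k n s = residueChooseSum k n r := by
  rcases abs_cases (2 * r - n) with ⟨habs, _⟩ | ⟨habs, _⟩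
  · exact ⟨r, habs.symm, rfl⟩
  · exact ⟨n - r, by omega, reflect k n r⟩

end residueChooseSum

/-- The paper's `H_a^n` and `H_b^n` are the residue classes of `p = n/2 + a` and `q = n/2 + b`. -/
theorem closer_class_bigger (n k : ℕ) (hk : 3 ≤ k) (hn : k ≤ n) (p q : ℤ)
    (hab : |2 * p - (n : ℤ)| < |2 * q - (n : ℤ)|)
    (hb : |2 * q - (n : ℤ)| ≤ (k : ℤ)) :
    ∑ i ∈ (Finset.range (n + 1)).filter (fun i : ℕ => (i : ℤ) % k = q % k), n.choose i
      < ∑ i ∈ (Finset.range (n + 1)).filter (fun i : ℕ => (i : ℤ) % k = p % k),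
          n.choose i := by
  obtain ⟨p', hp', hSp⟩ := residueChooseSum.exists_two_mul_sub_eq_abs k n p
  obtain ⟨q', hq', hSq⟩ := residueChooseSum.exists_two_mul_sub_eq_abs k n q
  have := abs_nonneg (2 * p - n)
  change residueChooseSum k n q < residueChooseSum k n p
  rw [← hSp, ← hSq]
  exact residueChooseSum.strictAntiOn hk (by omega) ⟨by omega, by omega⟩ ⟨by omega, by omega⟩
    (by omega)
end

section
/- Let n, c be positive integers with c > 1, and let F ⊆ 2^[n] contain no two distinct sets A, B with A ⊂ B and c·|A| ≤ |B|. Then |F| ≤ |{F ⊆ [n] : k+1 ≤ |F| ≤ c(k+1) - 1}| where k = ⌊n/(c+1)⌋. -/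
/-!
Call `A ⊂ B` with `c * #A ≤ #B` a `c`-step; `F` contains none. We map every subset of `[n]` into
the middle layers `k + 1 ≤ #S ≤ c (k + 1) - 1` so that any two sets with the same image are
related by a `c`-step; such a map is injective on `F`.

Sets of size at least `c (k + 1)` are sent to one of their `(k + 1)`-subsets along a matching,
which exists because the binomial tail `∑_{j ≥ c (k + 1)} C(n, j)` is at most `C(n, k + 1)`.
A nonempty set of size at most `k` is pushed up along an injective map `σ` taking each `i`-set to
one of its `c i`-supersets (this needs `(c + 1) k ≤ n`) until it has more than `k` elements; by
injectivity of `σ`, the sets reaching the same middle set form a single `σ`-orbit segment, hence a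
chain of `c`-steps. Both matchings come from Hall's theorem through fractional matchings.
-/

open Finset

/-- Giving the edge from `i` to each `b ∈ t i` the weight `w i` is a fractional matching that
saturates `s`, so Hall's condition holds by double counting. -/
theorem Finset.exists_injOn_of_fractional_matching {ι β : Type*} [DecidableEq β] [Nonempty β]
    (s : Finset ι) (t : ι → Finset β) (w : ι → ℚ)
    (hw : ∀ i ∈ s, 1 ≤ w i * #(t i)) (ht : ∀ b, ∑ i ∈ s with b ∈ t i, w i ≤ 1) :
    ∃ f : ι → β, Set.InjOn f s ∧ ∀ i ∈ s, f i ∈ t i := by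
  classical
  have hw0 : ∀ i ∈ s, 0 ≤ w i := fun i hi => by
    by_contra! h
    have := hw i hi
    nlinarith [(#(t i)).cast_nonneg (α := ℚ)]
  have hall (u : Finset ι) (hu : u ⊆ s) : #u ≤ #(u.biUnion t) := by
    have : (#u : ℚ) ≤ #(u.biUnion t) := calc
      (#u : ℚ) = ∑ i ∈ u, 1 := by simp
      _ ≤ ∑ i ∈ u, ∑ _b ∈ t i, w i := sum_le_sum fun i hi => by
        simpa [mul_comm] using hw i (hu hi)
      _ = ∑ b ∈ u.biUnion t, ∑ i ∈ u with b ∈ t i, w i := sum_comm' (by simp; tauto)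
      _ ≤ ∑ b ∈ u.biUnion t, ∑ i ∈ s with b ∈ t i, w i := sum_le_sum fun b _ =>
        sum_le_sum_of_subset_of_nonneg (filter_subset_filter _ hu)
          fun i hi _ => hw0 i (mem_filter.1 hi).1
      _ ≤ ∑ _b ∈ u.biUnion t, 1 := sum_le_sum fun b _ => ht b
      _ = #(u.biUnion t) := by simp
    exact_mod_cast this
  obtain ⟨f, hf, hft⟩ := (all_card_le_biUnion_card_iff_exists_injective fun i : s => t i).1
    fun u => by
      have := hall (u.image Subtype.val) fun i hi => by
        obtain ⟨j, -, rfl⟩ := mem_image.1 hi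
        exact j.2
      rwa [card_image_of_injective _ Subtype.val_injective, image_biUnion] at this
  refine ⟨fun i => if h : i ∈ s then f ⟨i, h⟩ else Classical.arbitrary β, ?_, ?_⟩
  · intro i hi j hj hij
    rw [mem_coe] at hi hj
    simp only [dif_pos hi, dif_pos hj] at hij
    exact congrArg Subtype.val (hf hij)
  · intro i hi
    simpa [dif_pos hi] using hft ⟨i, hi⟩

theorem Nat.choose_le_choose_of_le_half_s11 {n a b : ℕ} (hab : a ≤ b) (hb : b ≤ n / 2) :
    n.choose a ≤ n.choose b := by
  induction b, hab using Nat.le_induction with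
  | base => rfl
  | succ b hab ih => exact (ih (by omega)).trans (Nat.choose_le_succ_of_lt_half_left (by omega))

theorem Nat.two_mul_choose_le_choose_succ {n x : ℕ} (h : 3 * x + 2 ≤ n) :
    2 * n.choose x ≤ n.choose (x + 1) := by
  refine Nat.le_of_mul_le_mul_right (c := x + 1) ?_ (by omega)
  rw [Nat.choose_succ_right_eq, mul_comm 2, mul_assoc]
  exact Nat.mul_le_mul_left _ (by omega)

theorem Finset.sum_range_le_of_two_mul_le {f : ℕ → ℕ} {m : ℕ}
    (h : ∀ x < m, 2 * f x ≤ f (x + 1)) : ∑ x ∈ range m, f x ≤ f m := by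
  induction m with
  | zero => simp
  | succ m ih =>
    rw [sum_range_succ]
    have := ih fun x hx => h x (by omega)
    have := h m (by omega)
    omega

theorem Nat.sum_Icc_choose_le_choose {n k L : ℕ} (hL : 2 * (k + 1) ≤ L) (hn : n ≤ L + k) :
    ∑ j ∈ Icc L n, n.choose j ≤ n.choose (k + 1) := by
  rcases lt_or_ge n L with hnL | hLn
  · simp [Icc_eq_empty_of_lt hnL]
  have reflect : ∑ j ∈ Icc L n, n.choose j = ∑ x ∈ range (n + 1 - L), n.choose x := by
    rw [range_eq_Ico, ← Nat.sub_self (n + 1), ← sum_Ico_reflect _ _ le_rfl,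
      Ico_add_one_right_eq_Icc]
    exact sum_congr rfl fun j hj => (Nat.choose_symm (mem_Icc.1 hj).2).symm
  calc ∑ j ∈ Icc L n, n.choose j = ∑ x ∈ range (n + 1 - L), n.choose x := reflect
    _ ≤ n.choose (n + 1 - L) :=
      sum_range_le_of_two_mul_le fun x hx => Nat.two_mul_choose_le_choose_succ (by omega)
    _ ≤ n.choose (k + 1) := Nat.choose_le_choose_of_le_half_s11 (by omega) (by omega)

def ScaledSSubset {α : Type*} (c : ℕ) (A B : Finset α) : Prop := A ⊂ B ∧ c * #A ≤ #B

namespace ScaledSSubset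

variable {α : Type*} {c : ℕ} {A B C : Finset α}

theorem of_subset (h : A ⊆ B) (hlt : #A < #B) (hc : c * #A ≤ #B) : ScaledSSubset c A B :=
  ⟨h.ssubset_of_ne (by rintro rfl; exact hlt.false), hc⟩

theorem empty_left (hB : B.Nonempty) : ScaledSSubset c ∅ B := ⟨hB.empty_ssubset, by simp⟩

theorem trans (hAB : ScaledSSubset c A B) (hBC : ScaledSSubset c B C) : ScaledSSubset c A C :=
  ⟨hAB.1.trans hBC.1, hAB.2.trans (card_le_card hBC.1.subset)⟩

end ScaledSSubset

def ScalesUp {α : Type*} (c k : ℕ) (σ : Finset α → Finset α) : Prop :=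
  ∀ A, #A ≤ k → A ⊆ σ A ∧ #(σ A) = c * #A

open Classical in
/-- If no iterate of `A` has more than `k` elements (e.g. `A = ∅`), the junk value is `A`. -/
noncomputable def climb {α : Type*} (σ : Finset α → Finset α) (k : ℕ) (A : Finset α) :
    Finset α :=
  if h : ∃ m, k < #(σ^[m] A) then σ^[Nat.find h] A else A

theorem climb_eq_iterate {α : Type*} {σ : Finset α → Finset α} {k : ℕ} {A : Finset α}
    (h : ∃ m, k < #(σ^[m] A)) : climb σ k A = σ^[Nat.find h] A :=
  dif_pos h

namespace ScalesUp

variable {α : Type*} {σ : Finset α → Finset α} {c k : ℕ} {A B : Finset α}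

theorem scaledSSubset_apply (hσ : ScalesUp c k σ) (hc : 1 < c) (hA : A.Nonempty) (hk : #A ≤ k) :
    ScaledSSubset c A (σ A) := by
  obtain ⟨hsub, hcard⟩ := hσ A hk
  have := hA.card_pos
  exact .of_subset hsub (by rw [hcard]; nlinarith) hcard.ge

theorem exists_lt_card_iterate (hσ : ScalesUp c k σ) (hc : 1 < c) (hA : A.Nonempty) :
    ∃ m, k < #(σ^[m] A) := by
  by_contra! hsmall
  have grows (m : ℕ) : m < #(σ^[m] A) := by
    induction m with
    | zero => exact hA.card_pos
    | succ m ih =>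
      rw [Function.iterate_succ_apply']
      have hne : (σ^[m] A).Nonempty := card_pos.1 (by omega)
      have := card_lt_card (hσ.scaledSSubset_apply hc hne (hsmall m)).1
      omega
  exact (grows k).not_ge (hsmall k)

theorem scaledSSubset_iterate_succ (hσ : ScalesUp c k σ) (hc : 1 < c) (hA : A.Nonempty)
    (h : ∃ m, k < #(σ^[m] A)) {l : ℕ} (hl : l < Nat.find h) :
    ScaledSSubset c A (σ^[l + 1] A) := by
  have small (i : ℕ) (hi : i < Nat.find h) : #(σ^[i] A) ≤ k := not_lt.1 (Nat.find_min h hi)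
  induction l with
  | zero => exact hσ.scaledSSubset_apply hc hA (small 0 hl)
  | succ l ih =>
    have hAl := ih (by omega)
    rw [Function.iterate_succ_apply']
    exact hAl.trans (hσ.scaledSSubset_apply hc (hA.mono hAl.1.subset) (small _ hl))

theorem lt_card_climb (hσ : ScalesUp c k σ) (hc : 1 < c) (hA : A.Nonempty) :
    k < #(climb σ k A) := by
  rw [climb_eq_iterate (hσ.exists_lt_card_iterate hc hA)]
  exact Nat.find_spec (hσ.exists_lt_card_iterate hc hA)

theorem card_climb_le (hσ : ScalesUp c k σ) (hc : 1 < c) (hA : A.Nonempty) :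
    #(climb σ k A) ≤ max #A (c * k) := by
  have h := hσ.exists_lt_card_iterate hc hA
  rw [climb_eq_iterate h]
  rcases hfind : Nat.find h with _ | l
  · exact le_max_left _ _
  · have small : #(σ^[l] A) ≤ k := not_lt.1 (Nat.find_min h (by omega))
    rw [Function.iterate_succ_apply', (hσ _ small).2]
    exact le_max_of_le_right (Nat.mul_le_mul_left c small)

theorem eq_or_scaledSSubset_climb (hσ : ScalesUp c k σ) (hc : 1 < c) (hA : A.Nonempty) :
    A = climb σ k A ∨ ScaledSSubset c A (climb σ k A) := by
  have h := hσ.exists_lt_card_iterate hc hA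
  rw [climb_eq_iterate h]
  rcases hfind : Nat.find h with _ | l
  · exact .inl rfl
  · exact .inr (hσ.scaledSSubset_iterate_succ hc hA h (by omega))

theorem comparable_of_climb_eq (hσ : ScalesUp c k σ) (hinj : σ.Injective) (hc : 1 < c)
    (hA : A.Nonempty) (hB : B.Nonempty) (h : climb σ k A = climb σ k B) :
    A = B ∨ ScaledSSubset c A B ∨ ScaledSSubset c B A := by
  have hA' := hσ.exists_lt_card_iterate hc hA
  have hB' := hσ.exists_lt_card_iterate hc hB
  rw [climb_eq_iterate hA', climb_eq_iterate hB'] at h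
  wlog hle : Nat.find hB' ≤ Nat.find hA' generalizing A B
  · rcases this hB hA hB' hA' h.symm (by omega) with h' | h' | h'
    · exact .inl h'.symm
    · exact .inr (.inr h')
    · exact .inr (.inl h')
  obtain ⟨d, hd⟩ := Nat.exists_eq_add_of_le hle
  rw [hd, Function.iterate_add_apply] at h
  replace h := hinj.iterate _ h
  rcases d with _ | l
  · exact .inl h
  · exact .inr (.inl (h ▸ hσ.scaledSSubset_iterate_succ hc hA hA' (by omega)))

end ScalesUp

variable {α : Type*} [Fintype α] [DecidableEq α]

theorem exists_injective_scalesUp {c k : ℕ} (hc : 0 < c)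
    (hk : (c + 1) * k ≤ Fintype.card α) :
    ∃ σ : Finset α → Finset α, σ.Injective ∧ ScalesUp c k σ := by
  set n := Fintype.card α
  set small : Finset (Finset α) := {A | #A ≤ k}
  let up (A : Finset α) : Finset (Finset α) := {T ∈ univ.powersetCard (c * #A) | A ⊆ T}
  have card_up (A : Finset α) : #(up A) = (n - #A).choose (c * #A - #A) := by
    simpa using card_filter_powersetCard_subset A univ (c * #A) (subset_univ A)
      (Nat.le_mul_of_pos_left _ hc)
  -- an `i`-set has at least as many `c i`-supersets as a `c i`-set has `i`-subsets
  have choose_le {i : ℕ} (hi : i ≤ k) :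
      0 < (n - i).choose (c * i - i) ∧ (c * i).choose i ≤ (n - i).choose (c * i - i) := by
    have : c * i + i ≤ n := by nlinarith
    have : i ≤ c * i := Nat.le_mul_of_pos_left i hc
    refine ⟨Nat.choose_pos (by omega), ?_⟩
    rw [← Nat.choose_symm this]
    exact Nat.choose_le_choose _ (by omega)
  have hw : ∀ A ∈ small, 1 ≤ (#(up A) : ℚ)⁻¹ * #(up A) := by
    intro A hA
    rw [card_up, inv_mul_cancel₀ (by exact_mod_cast (choose_le (mem_filter.1 hA).2).1.ne')]
  have ht : ∀ T, ∑ A ∈ small with T ∈ up A, (#(up A) : ℚ)⁻¹ ≤ 1 := by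
    intro T
    rcases (filter (fun A => T ∈ up A) small).eq_empty_or_nonempty with h | ⟨A₀, hA₀⟩
    · simp [h]
    simp only [small, up, mem_filter, mem_univ, true_and, mem_powersetCard] at hA₀
    have hmem : ∀ A ∈ filter (fun A => T ∈ up A) small, A ∈ T.powersetCard #A₀ := by
      intro A hA
      simp only [small, up, mem_filter, mem_univ, true_and, mem_powersetCard] at hA ⊢
      exact ⟨hA.2.2, Nat.eq_of_mul_eq_mul_left hc (hA.2.1.2.symm.trans hA₀.2.1.2)⟩
    obtain ⟨hpos, hle⟩ := choose_le hA₀.1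
    calc ∑ A ∈ small with T ∈ up A, (#(up A) : ℚ)⁻¹
        = ∑ A ∈ small with T ∈ up A, ((n - #A₀).choose (c * #A₀ - #A₀) : ℚ)⁻¹ :=
          sum_congr rfl fun A hA => by rw [card_up, (mem_powersetCard.1 (hmem A hA)).2]
      _ ≤ (T.powersetCard #A₀).card * ((n - #A₀).choose (c * #A₀ - #A₀) : ℚ)⁻¹ := by
          rw [sum_const, nsmul_eq_mul]
          gcongr
          exact fun A hA => hmem A hA
      _ ≤ 1 := by
          rw [card_powersetCard, hA₀.2.1.2, ← div_eq_mul_inv,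
            div_le_one (by exact_mod_cast hpos)]
          exact_mod_cast hle
  obtain ⟨ψ, hψinj, hψ⟩ := exists_injOn_of_fractional_matching small up _ hw ht
  have hmaps : Set.MapsTo ψ small (univ : Finset (Finset α)) := fun _ _ => mem_coe.2 (mem_univ _)
  obtain ⟨g, hg⟩ := hmaps.exists_equiv_extend_of_card_eq (by simp) hψinj
  refine ⟨g.trans (Equiv.subtypeUnivEquiv mem_univ), Equiv.injective _, fun A hA => ?_⟩
  have hA' : A ∈ small := by simpa [small] using hA
  have := hψ A hA'
  simp only [up, mem_filter, mem_powersetCard] at this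
  simpa [hg A hA'] using this.symm

theorem exists_injOn_subset_card_eq {K L : ℕ} (hKL : K ≤ L)
    (hsum : ∑ j ∈ Icc L (Fintype.card α), (Fintype.card α).choose j ≤
      (Fintype.card α).choose K) :
    ∃ φ : Finset α → Finset α, Set.InjOn φ {B | L ≤ #B} ∧
      ∀ B, L ≤ #B → φ B ⊆ B ∧ #(φ B) = K := by
  set n := Fintype.card α
  set large : Finset (Finset α) := {B | L ≤ #B}
  have hw : ∀ B ∈ large, 1 ≤ (#(B.powersetCard K) : ℚ)⁻¹ * #(B.powersetCard K) := by
    intro B hB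
    rw [inv_mul_cancel₀ (Nat.cast_ne_zero.2 (card_pos.2
      (powersetCard_nonempty.2 (hKL.trans (mem_filter.1 hB).2))).ne')]
  have ht (T : Finset α) :
      ∑ B ∈ large with T ∈ B.powersetCard K, (#(B.powersetCard K) : ℚ)⁻¹ ≤ 1 := by
    by_cases hT : #T = K
    swap
    · simp [hT]
    have hKn : K ≤ n := hT ▸ card_le_univ T
    set S := large.filter fun B => T ∈ B.powersetCard K
    have fiber (j : ℕ) (hj : L ≤ j) : {B ∈ S | #B = j} =
        {B ∈ (univ : Finset α).powersetCard j | T ⊆ B} := by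
      ext B
      simp only [S, large, mem_filter, mem_univ, true_and, mem_powersetCard, subset_univ, hT]
      constructor
      · rintro ⟨⟨-, hTB, -⟩, hB⟩
        exact ⟨hB, hTB⟩
      · rintro ⟨hB, hTB⟩
        exact ⟨⟨hB ▸ hj, hTB, trivial⟩, hB⟩
    calc ∑ B ∈ S, (#(B.powersetCard K) : ℚ)⁻¹
        = ∑ j ∈ Icc L n, ∑ B ∈ S with #B = j, (#(B.powersetCard K) : ℚ)⁻¹ := by
          refine (sum_fiberwise_of_maps_to (fun B hB => ?_) _).symm
          simp only [S, large, mem_filter, mem_univ, true_and] at hB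
          exact mem_Icc.2 ⟨hB.1, card_le_univ B⟩
      _ = ∑ j ∈ Icc L n, ((n - K).choose (j - K) : ℚ) * (j.choose K : ℚ)⁻¹ := by
          refine sum_congr rfl fun j hj => ?_
          rw [sum_congr rfl fun B hB => by rw [card_powersetCard, (mem_filter.1 hB).2],
            sum_const, fiber j (mem_Icc.1 hj).1, card_filter_powersetCard_subset _ _ _
            (subset_univ T) (hT ▸ hKL.trans (mem_Icc.1 hj).1), card_univ, hT, nsmul_eq_mul]
      _ = ∑ j ∈ Icc L n, (n.choose j : ℚ) / n.choose K := by
          refine sum_congr rfl fun j hj => ?_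
          have hKj : K ≤ j := hKL.trans (mem_Icc.1 hj).1
          have hpos : (0 : ℚ) < j.choose K := by exact_mod_cast Nat.choose_pos hKj
          have hpos' : (0 : ℚ) < n.choose K := by exact_mod_cast Nat.choose_pos hKn
          rw [← div_eq_mul_inv, div_eq_div_iff hpos.ne' hpos'.ne']
          norm_cast
          rw [Nat.choose_mul hKj, mul_comm]
      _ ≤ 1 := by
          rw [← sum_div, div_le_one (by exact_mod_cast Nat.choose_pos hKn)]
          exact_mod_cast hsum
  obtain ⟨φ, hφinj, hφ⟩ := exists_injOn_of_fractional_matching large _ _ hw ht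
  refine ⟨φ, by simpa [large] using hφinj, fun B hB => ?_⟩
  simpa using hφ B (by simpa [large] using hB)

theorem exists_comparable_fibers {c k : ℕ} (hc : 1 < c) (hkn : k < Fintype.card α)
    (hk : (c + 1) * k ≤ Fintype.card α) (hk' : Fintype.card α < (c + 1) * (k + 1)) :
    ∃ Φ : Finset α → Finset α, (∀ A, k + 1 ≤ #(Φ A) ∧ #(Φ A) ≤ c * (k + 1) - 1) ∧
      ∀ A B, Φ A = Φ B → A = B ∨ ScaledSSubset c A B ∨ ScaledSSubset c B A := by
  have hck : c * (k + 1) = c * k + c := by ring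
  have hck2 : 2 * (k + 1) ≤ c * (k + 1) := Nat.mul_le_mul_right _ hc
  obtain ⟨σ, hσinj, hσ⟩ := exists_injective_scalesUp (by omega) hk
  obtain ⟨φ, hφinj, hφ⟩ :=
    exists_injOn_subset_card_eq (α := α) (K := k + 1) (L := c * (k + 1)) (by omega)
      (Nat.sum_Icc_choose_le_choose hck2 (by nlinarith))
  obtain ⟨M, -, hM⟩ := exists_subset_card_eq (s := (univ : Finset α)) (n := k + 1)
    (by simpa using hkn)
  have down (B : Finset α) (hB : c * (k + 1) ≤ #B) : ScaledSSubset c (φ B) B := by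
    obtain ⟨hsub, hcard⟩ := hφ B hB
    exact .of_subset hsub (by omega) (by rw [hcard]; exact hB)
  -- `∅` is a `c`-step below every nonempty set, so its image `M` can be any middle set
  let Φ A := if A = ∅ then M else if c * (k + 1) ≤ #A then φ A else climb σ k A
  refine ⟨Φ, fun A => ?_, fun A B hAB => ?_⟩
  · simp only [Φ]
    split_ifs with h0 hlarge
    · omega
    · rw [(hφ A hlarge).2]; omega
    · have hA := nonempty_iff_ne_empty.2 h0
      have := hσ.lt_card_climb hc hA
      have := hσ.card_climb_le hc hA
      omega
  · have of_large (A B : Finset α) (hA : c * (k + 1) ≤ #A) (hAB : Φ A = Φ B) :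
        A = B ∨ ScaledSSubset c B A := by
      have hA0 : A.Nonempty := card_pos.1 (by omega)
      rcases B.eq_empty_or_nonempty with rfl | hB
      · exact .inr (.empty_left hA0)
      by_cases hBl : c * (k + 1) ≤ #B
      · simp only [Φ, if_neg hA0.ne_empty, if_pos hA, if_neg hB.ne_empty, if_pos hBl] at hAB
        exact .inl (hφinj hA hBl hAB)
      simp only [Φ, if_neg hA0.ne_empty, if_pos hA, if_neg hB.ne_empty, if_neg hBl] at hAB
      rcases hσ.eq_or_scaledSSubset_climb hc hB with h | h
      · exact .inr (h ▸ hAB ▸ down A hA)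
      · exact .inr (h.trans (hAB ▸ down A hA))
    rcases A.eq_empty_or_nonempty with rfl | hA
    · rcases B.eq_empty_or_nonempty with rfl | hB
      · exact .inl rfl
      · exact .inr (.inl (.empty_left hB))
    rcases B.eq_empty_or_nonempty with rfl | hB
    · exact .inr (.inr (.empty_left hA))
    by_cases hAl : c * (k + 1) ≤ #A
    · rcases of_large A B hAl hAB with h | h
      exacts [.inl h, .inr (.inr h)]
    by_cases hBl : c * (k + 1) ≤ #B
    · rcases of_large B A hBl hAB.symm with h | h
      exacts [.inl h.symm, .inr (.inl h)]
    simp only [Φ, if_neg hA.ne_empty, if_neg hAl, if_neg hB.ne_empty, if_neg hBl] at hAB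
    exact hσ.comparable_of_climb_eq hσinj hc hA hB hAB

/-- If `F ⊆ 2^[n]` contains no two distinct sets `A ⊂ B` with `c·|A| ≤ |B|`
(`c > 1` an integer), then `|F|` is at most the number of subsets of `[n]` whose
size lies in `[k+1, c(k+1)-1]`, where `k = ⌊n/(c+1)⌋`. -/
theorem integer_ratio_theorem (n c : ℕ) (hn : 0 < n) (hc : 1 < c)
    (F : Finset (Finset (Fin n)))
    (hF : ∀ A ∈ F, ∀ B ∈ F, A ⊂ B → ¬ (c * A.card ≤ B.card)) :
    F.card ≤ ((Finset.univ : Finset (Finset (Fin n))).filter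
      (fun S => n / (c + 1) + 1 ≤ S.card ∧ S.card ≤ c * (n / (c + 1) + 1) - 1)).card := by
  obtain ⟨Φ, hΦ, hfiber⟩ := exists_comparable_fibers (α := Fin n) (k := n / (c + 1)) hc
    (by simpa using Nat.div_lt_self hn (by omega))
    (by simpa [mul_comm] using Nat.div_mul_le_self n (c + 1))
    (by simpa using Nat.lt_mul_div_succ n (by omega : 0 < c + 1))
  refine card_le_card_of_injOn Φ (fun A _ => by simpa using hΦ A) fun A hA B hB hAB => ?_
  rcases hfiber A B hAB with h | h | h
  · exact h
  · exact absurd h.2 (hF A hA B hB h.1)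
  · exact absurd h.2 (hF B hB A hA h.1)
end

section
/- Let F ⊆ 2^[n], ℓ ≥ 1, and suppose S is a real number such that for every full chain C in 2^[n], Σ over ℓ-chains G_1 ⊂ ... ⊂ G_ℓ with all G_i ∈ F ∩ C of C(n,|G_ℓ|)·C(|G_ℓ|,|G_{ℓ-1}|)···C(|G_2|,|G_1|) ≤ S. Then the number of ℓ-chains contained in F is at most S. -/
/-!
Average the hypothesis over the `n!` full chains `σ({x | x < k})`, `k = 0, …, n`, given by the
permutations `σ` of `Fin n`. A chain `G` with sizes `k₀ ≤ ⋯ ≤ k_ℓ` lies on exactly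
`k₀! (k₁ - k₀)! ⋯ (n - k_ℓ)!` of them (`σ` must map each layer of positions onto the
corresponding layer `G_i \ G_{i-1}`), and this count times the weight
`C(n, k_ℓ) ∏ C(k_{j+1}, k_j)` telescopes to `n!`. Hence the sum of the hypothesis over all `σ`
is `n!` times the number of chains in `F`, and it is at most `n! · S`.
-/

open Finset
open scoped Nat

section PermCount
variable {α β : Type*} [Fintype α] [DecidableEq α] [Fintype β] [DecidableEq β]

theorem card_perm_comp_eq_prod_factorial (f g : α → β)
    (hfg : ∀ b, #{x | f x = b} = #{x | g x = b}) :
    #{σ : Equiv.Perm α | f ∘ σ = g} = ∏ b, (#{x | f x = b})! := by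
  have fiberEquiv (b : β) : {x // g x = b} ≃ {x // f x = b} :=
    Fintype.equivOfCardEq (by simp only [Fintype.card_subtype, hfg])
  set τ : Equiv.Perm α := Equiv.ofFiberEquiv fiberEquiv
  have hτ : f ∘ τ = g := funext (Equiv.ofFiberEquiv_map fiberEquiv)
  -- right multiplication by `τ⁻¹` identifies the solutions of `f ∘ σ = g` with the stabilizer
  -- of `f`
  have hcoset : {σ : Equiv.Perm α // f ∘ σ = g} ≃ {π : Equiv.Perm α // f ∘ π = f} :=
    (Equiv.mulRight τ⁻¹).subtypeEquiv fun σ => by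
      rw [← hτ, Equiv.coe_mulRight, Equiv.Perm.coe_mul, ← Function.comp_assoc,
        Equiv.Perm.inv_def, Equiv.comp_symm_eq]
  rw [← Fintype.card_subtype, Fintype.card_congr hcoset, DomMulAct.stabilizer_card]
  simp only [Fintype.card_subtype]

end PermCount

theorem card_filter_eq_eq_sub {α : Type*} [Fintype α] (u : α → ℕ) (b : ℕ) :
    #{x | u x = b} = #{x | u x < b + 1} - #{x | u x < b} := by
  classical
  rw [eq_tsub_iff_add_eq_of_le (card_le_card (monotone_filter_right _ fun x h => by omega)),
    ← card_union_of_disjoint (disjoint_filter.2 fun x _ h => by omega), ← filter_or]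
  congr 1; ext x; simp only [mem_filter, mem_univ, true_and]; omega

theorem factorial_mul_prod_factorial_sub_mul_choose (K : ℕ → ℕ) (hK : Monotone K) (m : ℕ) :
    (K 0)! * ∏ b ∈ range m, ((K (b + 1) - K b)! * (K (b + 1)).choose (K b)) = (K m)! := by
  induction m with
  | zero => simp
  | succ m ih =>
    rw [prod_range_succ, ← mul_assoc, ih, mul_comm, mul_assoc, mul_comm (_ - _)!,
      Nat.choose_mul_factorial_mul_factorial (hK m.le_succ)]

section EntryIndex
variable {α : Type*} [DecidableEq α] {m : ℕ}

def entryIndex (E : Fin m → Finset α) (x : α) : Fin (m + 1) :=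
  ⟨#{i | x ∉ E i}, Nat.lt_succ_of_le ((card_filter_le _ _).trans_eq (card_fin m))⟩

variable {E E' : Fin m → Finset α}

theorem entryIndex_le_iff (hE : Monotone E) (x : α) (j : Fin m) :
    (entryIndex E x : ℕ) ≤ j ↔ x ∈ E j := by
  constructor
  · intro h
    by_contra hx
    have hsub : Iic j ⊆ ({i | x ∉ E i} : Finset _) := fun i hi =>
      mem_filter.2 ⟨mem_univ _, fun hxi => hx (hE (mem_Iic.1 hi) hxi)⟩
    have := card_le_card hsub
    rw [Fin.card_Iic] at this
    exact absurd h (by simp only [entryIndex]; omega)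
  · intro hx
    have hsub : ({i | x ∉ E i} : Finset _) ⊆ Iio j := fun i hi =>
      mem_Iio.2 (lt_of_not_ge fun hji => (mem_filter.1 hi).2 (hE hji hx))
    simpa only [entryIndex, Fin.card_Iio] using card_le_card hsub

theorem entryIndex_eq_entryIndex_iff (hE : Monotone E) (hE' : Monotone E') (x y : α) :
    entryIndex E x = entryIndex E' y ↔ ∀ i, x ∈ E i ↔ y ∈ E' i := by
  refine ⟨fun h i => ?_, fun h => by simp only [entryIndex, h]⟩
  rw [← entryIndex_le_iff hE, ← entryIndex_le_iff hE', h]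

theorem card_entryIndex_lt_succ [Fintype α] (hE : Monotone E) (j : Fin m) :
    #{x | (entryIndex E x : ℕ) < j + 1} = #(E j) := by
  simp only [Nat.lt_succ_iff, entryIndex_le_iff hE, filter_mem_eq_inter, univ_inter]

theorem card_entryIndex_lt_of_le [Fintype α] {b : ℕ} (hb : m + 1 ≤ b) :
    #{x | (entryIndex E x : ℕ) < b} = Fintype.card α := by
  rw [filter_true_of_mem fun x _ => (entryIndex E x).isLt.trans_le hb, card_univ]

theorem card_entryIndex_eq_eq [Fintype α] (hE : Monotone E) (hE' : Monotone E')
    (hcard : ∀ i, #(E i) = #(E' i)) (b : Fin (m + 1)) :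
    #{x | entryIndex E x = b} = #{x | entryIndex E' x = b} := by
  have hlt : ∀ k, #{x | (entryIndex E x : ℕ) < k} = #{x | (entryIndex E' x : ℕ) < k} := by
    rintro (_ | k)
    · simp
    · rcases lt_or_ge k m with hk | hk
      · exact (card_entryIndex_lt_succ hE ⟨k, hk⟩).trans
          ((hcard _).trans (card_entryIndex_lt_succ hE' ⟨k, hk⟩).symm)
      · rw [card_entryIndex_lt_of_le (by omega), card_entryIndex_lt_of_le (by omega)]
  simp only [Fin.ext_iff, card_filter_eq_eq_sub, hlt]

end EntryIndex

def chainWeight (n : ℕ) {ℓ : ℕ} (k : Fin (ℓ + 1) → ℕ) : ℕ :=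
  n.choose (k (Fin.last ℓ)) * ∏ j : Fin ℓ, (k j.succ).choose (k j.castSucc)

theorem chainWeight_eq_prod_range (K : ℕ → ℕ) (hK : K 0 = 0) (ℓ : ℕ) :
    chainWeight (K (ℓ + 2)) (fun j : Fin (ℓ + 1) => K (j + 1))
      = ∏ b ∈ range (ℓ + 2), (K (b + 1)).choose (K b) := by
  rw [prod_range_succ, prod_range_succ', hK, Nat.choose_zero_right, mul_one, chainWeight,
    mul_comm, ← Fin.prod_univ_eq_prod_range (fun b => (K (b + 1 + 1)).choose (K (b + 1)))]
  simp [Fin.val_succ]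

section FullChain
variable {n : ℕ}

def fullChain (σ : Equiv.Perm (Fin n)) (k : ℕ) : Finset (Fin n) :=
  ({x | (x : ℕ) < k} : Finset (Fin n)).map σ.toEmbedding

theorem card_fullChain (σ : Equiv.Perm (Fin n)) {k : ℕ} (hk : k ≤ n) :
    #(fullChain σ k) = k := by
  rw [fullChain, card_map, Fin.card_filter_val_lt, min_eq_right hk]

theorem fullChain_mono (σ : Equiv.Perm (Fin n)) : Monotone (fullChain σ) :=
  fun _ _ h => map_subset_map.2 (monotone_filter_right _ fun _ _ hx => hx.trans_le h)

theorem fullChain_ssubset_fullChain (σ : Equiv.Perm (Fin n)) {a b : ℕ} (hab : a < b)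
    (hb : b ≤ n) : fullChain σ a ⊂ fullChain σ b :=
  ssubset_of_subset_of_ne (fullChain_mono σ hab.le) fun h => by
    have := congrArg card h
    rw [card_fullChain σ (hab.le.trans hb), card_fullChain σ hb] at this
    omega

theorem monotone_filter_val_lt_card {m : ℕ} {G : Fin m → Finset (Fin n)} (hG : Monotone G) :
    Monotone fun i => ({x | (x : ℕ) < #(G i)} : Finset (Fin n)) :=
  fun _ _ h => monotone_filter_right _ fun _ _ hx => hx.trans_le (card_le_card (hG h))

theorem fullChain_card_eq_iff_entryIndex_comp {m : ℕ} {G : Fin m → Finset (Fin n)}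
    (hG : Monotone G) (σ : Equiv.Perm (Fin n)) :
    (∀ i, fullChain σ #(G i) = G i) ↔
      entryIndex G ∘ σ = entryIndex (fun i => ({x | (x : ℕ) < #(G i)} : Finset (Fin n))) := by
  simp only [funext_iff, Function.comp_apply,
    entryIndex_eq_entryIndex_iff hG (monotone_filter_val_lt_card hG), fullChain,
    Finset.ext_iff, mem_map_equiv]
  rw [forall_comm, ← σ.forall_congr_right]
  simp only [Equiv.symm_apply_apply, Iff.comm]

theorem card_fullChain_card_eq_mul_chainWeight {ℓ : ℕ} {G : Fin (ℓ + 1) → Finset (Fin n)}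
    (hG : Monotone G) :
    #{σ : Equiv.Perm (Fin n) | ∀ i, fullChain σ #(G i) = G i} * chainWeight n (fun i => #(G i))
      = n ! := by
  have hGI (i : Fin (ℓ + 1)) : #(G i) = #({x | (x : ℕ) < #(G i)} : Finset (Fin n)) := by
    rw [Fin.card_filter_val_lt,
      min_eq_right (card_le_univ (G i) |>.trans_eq (Fintype.card_fin n))]
  -- `K` extends the size sequence of `G` by `K 0 = 0` and `K (ℓ + 2) = n`
  set K := fun b => #{y | (entryIndex G y : ℕ) < b}
  have hK : Monotone K :=
    fun a b h => card_le_card (monotone_filter_right _ fun _ _ hy => hy.trans_le h)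
  have hK0 : K 0 = 0 := by simp [K]
  have hKn : K (ℓ + 2) = n := by
    simp only [K, card_entryIndex_lt_of_le le_rfl, Fintype.card_fin]
  have hweight :
      chainWeight n (fun i => #(G i)) = ∏ b ∈ range (ℓ + 2), (K (b + 1)).choose (K b) := by
    rw [← chainWeight_eq_prod_range K hK0, hKn]
    simp only [K, card_entryIndex_lt_succ hG]
  have hfactorial :
      ∏ b, (#{y | entryIndex G y = b})! = ∏ b ∈ range (ℓ + 2), (K (b + 1) - K b)! := by
    simp only [Fin.ext_iff, card_filter_eq_eq_sub]
    exact Fin.prod_univ_eq_prod_range (fun b => (K (b + 1) - K b)!) (ℓ + 2)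
  rw [filter_congr fun σ _ => fullChain_card_eq_iff_entryIndex_comp hG σ,
    card_perm_comp_eq_prod_factorial _ _
      (card_entryIndex_eq_eq hG (monotone_filter_val_lt_card hG) hGI),
    hfactorial, hweight, ← prod_mul_distrib, ← hKn,
    ← factorial_mul_prod_factorial_sub_mul_choose K hK, hK0, Nat.factorial_zero, one_mul]

end FullChain

section DoubleCounting
variable {n ℓ : ℕ}

theorem sum_chainWeight_fullChain_eq (σ : Equiv.Perm (Fin n)) (F : Finset (Finset (Fin n))) :
    ∑ c ∈ ({c : Fin (ℓ + 1) → Fin (n + 1) | StrictMono c ∧ ∀ i, fullChain σ (c i) ∈ F} :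
        Finset _), chainWeight n (fun i => (c i : ℕ))
      = ∑ G ∈ ({G : Fin (ℓ + 1) → Finset (Fin n) | StrictMono G ∧ ∀ i, G i ∈ F} :
          Finset _) with ∀ i, fullChain σ #(G i) = G i, chainWeight n (fun i => #(G i)) := by
  have hcard (c : Fin (ℓ + 1) → Fin (n + 1)) (i : Fin (ℓ + 1)) :
      #(fullChain σ (c i)) = c i :=
    card_fullChain σ (Nat.lt_succ_iff.1 (c i).isLt)
  have hGn (G : Fin (ℓ + 1) → Finset (Fin n)) (i : Fin (ℓ + 1)) : #(G i) < n + 1 :=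
    Nat.lt_succ_of_le (card_le_univ (G i) |>.trans_eq (Fintype.card_fin n))
  refine sum_nbij' (fun c i => fullChain σ (c i)) (fun G i => ⟨#(G i), hGn G i⟩)
    ?_ ?_ ?_ ?_ ?_
  · simp only [mem_filter, mem_univ, true_and]
    rintro c ⟨hc, hF⟩
    refine ⟨⟨fun i j hij => ?_, hF⟩, fun i => by rw [hcard]⟩
    exact fullChain_ssubset_fullChain σ (hc hij) (Nat.lt_succ_iff.1 (c j).isLt)
  · simp only [mem_filter, mem_univ, true_and]
    rintro G ⟨⟨hG, hF⟩, hσ⟩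
    exact ⟨fun i j hij => Fin.mk_lt_mk.2 (card_lt_card (hG hij)),
      fun i => (hσ i).symm ▸ hF i⟩
  · intro c _
    funext i
    exact Fin.ext (hcard c i)
  · simp only [mem_filter, mem_univ, true_and]
    rintro G ⟨_, hσ⟩
    exact funext hσ
  · intro c _
    simp only [hcard]

theorem sum_perm_sum_chainWeight_fullChain (F : Finset (Finset (Fin n))) :
    ∑ σ : Equiv.Perm (Fin n),
        ∑ c ∈ ({c : Fin (ℓ + 1) → Fin (n + 1) | StrictMono c ∧ ∀ i, fullChain σ (c i) ∈ F} :
          Finset _), chainWeight n (fun i => (c i : ℕ))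
      = #({G : Fin (ℓ + 1) → Finset (Fin n) | StrictMono G ∧ ∀ i, G i ∈ F} : Finset _)
          * n ! := by
  simp_rw [sum_chainWeight_fullChain_eq]
  rw [sum_comm' (t' := {G | StrictMono G ∧ ∀ i, G i ∈ F})
      (s' := fun G => {σ | ∀ i, fullChain σ #(G i) = G i})
      fun σ G => by simp only [mem_filter, mem_univ, true_and, and_comm],
    card_eq_sum_ones, sum_mul, one_mul]
  refine sum_congr rfl fun G hG => ?_
  rw [sum_const, smul_eq_mul,
    card_fullChain_card_eq_mul_chainWeight (mem_filter.1 hG).2.1.monotone]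

end DoubleCounting

/-- If for every full chain `C` in `2^[n]` the total weight
`∑ C(n,|G_ℓ|)·C(|G_ℓ|,|G_{ℓ-1}|)⋯C(|G_2|,|G_1|)` over all `ℓ`-chains contained in
`F ∩ C` is at most `S`, then the number of `ℓ`-chains in `F` is at most `S`.
(Here the chain length is `ℓ + 1 ≥ 1`; an `ℓ`-chain is encoded as a strictly
increasing tuple of sets.) -/
theorem count_ell_chains (n ℓ : ℕ) (F : Finset (Finset (Fin n))) (S : ℝ)
    (h : ∀ A : ℕ → Finset (Fin n), (∀ i ≤ n, (A i).card = i) →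
      (∀ i < n, A i ⊆ A (i + 1)) →
      ∑ c ∈ (Finset.univ : Finset (Fin (ℓ + 1) → Fin (n + 1))).filter
          (fun c => (∀ i j, i < j → c i < c j) ∧ ∀ i, A (c i) ∈ F),
        ((n.choose (c (Fin.last ℓ)) *
            ∏ j : Fin ℓ, Nat.choose (c j.succ) (c j.castSucc) : ℕ) : ℝ) ≤ S) :
    (((Finset.univ : Finset (Fin (ℓ + 1) → Finset (Fin n))).filter
        (fun G => (∀ i j, i < j → G i ⊂ G j) ∧ ∀ i, G i ∈ F)).card : ℝ) ≤ S := by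
  have hσ (σ : Equiv.Perm (Fin n)) :
      ((∑ c ∈ ({c : Fin (ℓ + 1) → Fin (n + 1) | StrictMono c ∧ ∀ i, fullChain σ (c i) ∈ F} :
          Finset _), chainWeight n (fun i => (c i : ℕ)) : ℕ) : ℝ) ≤ S := by
    push_cast
    exact h (fullChain σ) (fun i hi => card_fullChain σ hi)
      (fun i _ => fullChain_mono σ i.le_succ)
  have htotal := sum_le_card_nsmul univ _ S fun σ _ => hσ σ
  rw [← Nat.cast_sum, sum_perm_sum_chainWeight_fullChain, Finset.card_univ, Fintype.card_perm,
    Fintype.card_fin, nsmul_eq_mul, Nat.cast_mul, mul_comm] at htotal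
  exact le_of_mul_le_mul_left htotal (by positivity)
end

section
/- Let d = 2i + k + 1 and i = c_1 < c_2 < ... < c_ℓ ≤ i + k be integers with i < ⌊(n-k)/2⌋ and d < n. Then n!/((n-c_ℓ)!·(c_ℓ-c_{ℓ-1})!···(c_2-c_1)!·c_1!) < n!/((n-(d-c_1))!·(c_2-c_1)!···(c_ℓ-c_{ℓ-1})!·(d-c_ℓ)!). -/
open Nat

lemma choose_lt_succ_of_lt {m r : ℕ} (h : 2 * r + 1 < m) :
    m.choose r < m.choose (r + 1) := by
  have hrm : r ≤ m := by omega
  have hpos : 0 < m.choose r := Nat.choose_pos hrm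
  have key := Nat.choose_succ_right_eq m r
  have : m.choose r * (r + 1) < m.choose r * (m - r) :=
    Nat.mul_lt_mul_of_le_of_lt (le_refl _) (by omega) hpos
  rw [← key] at this
  exact Nat.lt_of_mul_lt_mul_right this

lemma choose_mono_between {m r : ℕ} : ∀ s, r ≤ s → 2 * s ≤ m → m.choose r ≤ m.choose s := by
  intro s
  induction s with
  | zero => intro h _; simp [Nat.le_zero.mp h]
  | succ t ih =>
    intro hrs hsm
    rcases Nat.eq_or_lt_of_le hrs with h | h
    · rw [h]
    · exact le_trans (ih (by omega) (by omega))
        (le_of_lt (choose_lt_succ_of_lt (by omega)))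

lemma choose_strict_half {m a b : ℕ} (hab : a < b) (hbm : 2 * b ≤ m) :
    m.choose a < m.choose b :=
  lt_of_lt_of_le (choose_lt_succ_of_lt (by omega))
    (choose_mono_between b hab hbm)

lemma choose_strict {m a b : ℕ} (hab : a < b) (hm : a + b < m) :
    m.choose a < m.choose b := by
  rcases le_or_gt (2 * b) m with h | h
  · exact choose_strict_half hab h
  · rw [← Nat.choose_symm (by omega : b ≤ m)]
    exact choose_strict_half (by omega) (by omega)

/-- The key claim: with `d = 2i + k + 1` and `i = c_1 < c_2 < ⋯ < c_ℓ ≤ i + k`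
(encoded as a strictly increasing tuple `c` of length `ℓ + 1 ≥ 1`), if
`i < ⌊(n-k)/2⌋` and `d < n` then
`n!/((n-c_ℓ)!·(c_ℓ-c_{ℓ-1})!⋯(c_2-c_1)!·c_1!) <
 n!/((n-(d-c_1))!·(c_2-c_1)!⋯(c_ℓ-c_{ℓ-1})!·(d-c_ℓ)!)`. -/
theorem key_claim (n k ℓ i : ℕ) (c : Fin (ℓ + 1) → ℕ)
    (hmono : ∀ a b, a < b → c a < c b) (hc0 : c 0 = i)
    (hcl : c (Fin.last ℓ) ≤ i + k) (hi : i < (n - k) / 2) (hd : 2 * i + k + 1 < n) :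
    (n.factorial : ℚ) /
        ((n - c (Fin.last ℓ)).factorial *
          (∏ j : Fin ℓ, (c j.succ - c j.castSucc).factorial) * (c 0).factorial)
      < (n.factorial : ℚ) /
        ((n - (2 * i + k + 1 - c 0)).factorial *
          (∏ j : Fin ℓ, (c j.succ - c j.castSucc).factorial) *
          (2 * i + k + 1 - c (Fin.last ℓ)).factorial) := by
  rw [hc0]
  set L := c (Fin.last ℓ) with hL
  have hiL : i ≤ L := by
    rcases eq_or_lt_of_le (Fin.zero_le (Fin.last ℓ)) with h | h
    · rw [hL, ← h, hc0]
    · exact le_of_lt (hc0 ▸ hmono 0 (Fin.last ℓ) h)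
  -- the key factorial inequality
  set m := n + i - L with hm
  have hchoose : m.choose i < m.choose (2 * i + k + 1 - L) :=
    choose_strict (by omega) (by omega)
  have e1 := Nat.choose_mul_factorial_mul_factorial (show i ≤ m by omega)
  have e2 := Nat.choose_mul_factorial_mul_factorial
    (show 2 * i + k + 1 - L ≤ m by omega)
  have hma : m - i = n - L := by omega
  have hmb : m - (2 * i + k + 1 - L) = n - (2 * i + k + 1 - i) := by omega
  rw [hma] at e1
  rw [hmb] at e2
  have hXpos : 0 < i.factorial * (n - L).factorial :=
    Nat.mul_pos (Nat.factorial_pos _) (Nat.factorial_pos _)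
  have key : (n - (2 * i + k + 1 - i)).factorial * (2 * i + k + 1 - L).factorial
      < (n - L).factorial * i.factorial := by
    have h1 : m.choose (2 * i + k + 1 - L) *
        ((n - (2 * i + k + 1 - i)).factorial * (2 * i + k + 1 - L).factorial)
        < m.choose (2 * i + k + 1 - L) * ((n - L).factorial * i.factorial) := by
      calc m.choose (2 * i + k + 1 - L) *
            ((n - (2 * i + k + 1 - i)).factorial * (2 * i + k + 1 - L).factorial)
          = m.choose (2 * i + k + 1 - L) * (2 * i + k + 1 - L).factorial *
            (n - (2 * i + k + 1 - i)).factorial := by ring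
        _ = m.choose i * i.factorial * (n - L).factorial := by rw [e2, e1]
        _ = m.choose i * ((n - L).factorial * i.factorial) := by ring
        _ < m.choose (2 * i + k + 1 - L) * ((n - L).factorial * i.factorial) :=
            Nat.mul_lt_mul_of_lt_of_le hchoose (le_refl _) (Nat.mul_pos (Nat.factorial_pos _) (Nat.factorial_pos _))
    exact Nat.lt_of_mul_lt_mul_left h1
  set P := ∏ j : Fin ℓ, (c j.succ - c j.castSucc).factorial with hP
  have hPpos : 0 < P := Finset.prod_pos (fun j _ => Nat.factorial_pos _)
  have keyP : (n - (2 * i + k + 1 - i)).factorial * P * (2 * i + k + 1 - L).factorial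
      < (n - L).factorial * P * i.factorial := by
    calc (n - (2 * i + k + 1 - i)).factorial * P * (2 * i + k + 1 - L).factorial
        = P * ((n - (2 * i + k + 1 - i)).factorial * (2 * i + k + 1 - L).factorial) := by
          ring
      _ < P * ((n - L).factorial * i.factorial) := Nat.mul_lt_mul_of_pos_left key hPpos
      _ = (n - L).factorial * P * i.factorial := by ring
  have hD2pos : (0 : ℚ) < ((n - (2 * i + k + 1 - i)).factorial * P *
      (2 * i + k + 1 - L).factorial : ℕ) := by
    exact_mod_cast Nat.pos_of_ne_zero (by positivity)
  have hcast : (((n - (2 * i + k + 1 - i)).factorial * P *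
      (2 * i + k + 1 - L).factorial : ℕ) : ℚ)
      < (((n - L).factorial * P * i.factorial : ℕ) : ℚ) := by exact_mod_cast keyP
  have := div_lt_div_of_pos_left
    (show (0 : ℚ) < n.factorial by exact_mod_cast n.factorial_pos) hD2pos hcast
  push_cast at this ⊢
  convert this using 2 <;> ring
end
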